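/- arXiv:2210.12251 — 7 statements merged into one kernel-verified Lean document; each statement's English description precedes it below -/
import Mathlib

section
/- Let X = {0,1}^ℤ be the full 2-shift, let D = b_1⋯b_k be a binary k-block, and let φ: X → {0,1}^ℤ be the factor code with unambiguous symbol D, with image Y. Then the word 10^{k−1}1 is not in the language B(Y) if and only if D is purely periodic, i.e., D = u^ℓ for some word u and some integer ℓ ≥ 2. -/
open Set

noncomputable section

/-- The left shift map on bi-infinite sequences over `A`. -/
def shiftMap {A : Type*} (x : ℤ → A) : ℤ → A := fun i => x (i + 1)

/-- The word `w` occurs in `x` starting at coordinate `i`. -/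
def OccursAt {A : Type*} (w : List A) (x : ℤ → A) (i : ℤ) : Prop :=
  ∀ k : Fin w.length, x (i + (k : ℕ)) = w.get k

/-- The word `w` belongs to the language of `X`. -/
def OccursIn {A : Type*} (w : List A) (X : Set (ℤ → A)) : Prop :=
  ∃ x ∈ X, ∃ i : ℤ, OccursAt w x i

/-- A shift space: a nonempty, closed, shift-invariant subset of the full shift. -/
structure IsShiftSpace {A : Type*} [TopologicalSpace A] (X : Set (ℤ → A)) : Prop where
  nonempty : X.Nonempty
  isClosed : IsClosed X
  shift_eq : shiftMap '' X = X

/-- The set of points avoiding every word of the forbidden set `F`. -/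
def ForbidSet {A : Type*} (F : Set (List A)) : Set (ℤ → A) :=
  {x | ∀ w ∈ F, ∀ i : ℤ, ¬ OccursAt w x i}

/-- A shift of finite type: defined by a finite forbidden set of words. -/
def IsSFT {A : Type*} (X : Set (ℤ → A)) : Prop :=
  ∃ F : Set (List A), F.Finite ∧ X = ForbidSet F

/-- Irreducibility of a shift space: any two allowed words can be glued. -/
def IrreducibleShift {A : Type*} (X : Set (ℤ → A)) : Prop :=
  ∀ u v : List A, OccursIn u X → OccursIn v X → ∃ w : List A, OccursIn (u ++ w ++ v) X

/-- The `S`-gap shift: every maximal finite run of `0`'s lying between two `1`'s has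
length in `S`, and if `S` is finite there is no run of `0`'s longer than `sSup S`. -/
def GapShift (S : Set ℕ) : Set (ℤ → Fin 2) :=
  {x | (∀ i j : ℤ, i < j → x i = 1 → x j = 1 →
          (∀ l : ℤ, i < l → l < j → x l = 0) → (j - i - 1).toNat ∈ S) ∧
       (S.Finite → ∀ i : ℤ, ∃ l : ℤ, i ≤ l ∧ l ≤ i + ((sSup S : ℕ) : ℤ) ∧ x l = 1)}

/-- The factor code with unambiguous symbol `D`: the sliding block code sending `x`
to the indicator sequence of the occurrences of the block `D` in `x`. -/
def unambigCode {A : Type*} (D : List A) : (ℤ → A) → (ℤ → Fin 2) :=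
  fun x i => @ite _ (OccursAt D x i) (Classical.propDecidable _) 1 0

/-- `φ` restricted to `Z` is finite-to-one: fibers have uniformly bounded cardinality. -/
def FiniteToOneOn {A B : Type*} (φ : (ℤ → A) → (ℤ → B)) (Z : Set (ℤ → A)) : Prop :=
  ∃ M : ℕ, ∀ y : ℤ → B, ({x ∈ Z | φ x = y}).Finite ∧ ({x ∈ Z | φ x = y}).ncard ≤ M

lemma code_one {A : Type*} {D : List A} {x : ℤ → A} {i : ℤ} (h : OccursAt D x i) :
    unambigCode D x i = 1 := if_pos h

lemma code_zero {A : Type*} {D : List A} {x : ℤ → A} {i : ℤ} (h : ¬ OccursAt D x i) :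
    unambigCode D x i = 0 := if_neg h

lemma code_eq_one_iff {A : Type*} {D : List A} {x : ℤ → A} {i : ℤ} :
    unambigCode D x i = 1 ↔ OccursAt D x i := by
  constructor
  · intro h
    by_contra hno
    rw [code_zero hno] at h
    exact absurd h (by decide)
  · exact code_one

lemma flat_len {A : Type*} (u : List A) (ℓ : ℕ) :
    (List.replicate ℓ u).flatten.length = ℓ * u.length := by
  induction ℓ with
  | zero => simp
  | succ n ih => rw [List.replicate_succ, List.flatten_cons, List.length_append, ih]; ring

lemma flat_get {A : Type*} (u : List A) : ∀ (ℓ j : ℕ), j < ℓ * u.length →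
    ((List.replicate ℓ u).flatten)[j]? = u[j % u.length]? := by
  intro ℓ
  induction ℓ with
  | zero => intro j hj; simp at hj
  | succ n ih =>
    intro j hj
    rw [List.replicate_succ, List.flatten_cons, List.getElem?_append]
    split
    · rw [Nat.mod_eq_of_lt (by assumption)]
    · have h : u.length ≤ j := by omega
      have hlt : j - u.length < n * u.length := by
        have : j < u.length + n * u.length := by
          have := hj; rw [Nat.succ_mul] at this; omega
        omega
      rw [ih (j - u.length) hlt, Nat.mod_eq_sub_mod h]

lemma get_eq_of_getElem? {A : Type*} (D : List A) {a b : ℕ} (ha : a < D.length)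
    (hb : b < D.length) (h : D[a]? = D[b]?) : D.get ⟨a, ha⟩ = D.get ⟨b, hb⟩ := by
  rw [List.getElem?_eq_getElem ha, List.getElem?_eq_getElem hb] at h
  simpa [List.get_eq_getElem] using Option.some.inj h

lemma getElem?_eq_of_get {A : Type*} (D : List A) {a b : ℕ} (ha : a < D.length)
    (hb : b < D.length) (h : D.get ⟨a, ha⟩ = D.get ⟨b, hb⟩) : D[a]? = D[b]? := by
  rw [List.getElem?_eq_getElem ha, List.getElem?_eq_getElem hb]
  simpa [List.get_eq_getElem] using h

lemma w_len (k : ℕ) (hk : 0 < k) :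
    (1 :: (List.replicate (k - 1) (0 : Fin 2) ++ [1])).length = k + 1 := by
  simp; omega

lemma w_get (k n : ℕ) (hk : 0 < k) (hn : n ≤ k)
    (h : n < (1 :: (List.replicate (k - 1) (0 : Fin 2) ++ [1])).length) :
    (1 :: (List.replicate (k - 1) (0 : Fin 2) ++ [1])).get ⟨n, h⟩ =
      if n = 0 ∨ n = k then 1 else 0 := by
  rcases n with _ | n'
  · simp
  · rw [List.get_eq_getElem, List.getElem_cons_succ]
    by_cases hc : n' < k - 1
    · rw [List.getElem_append_left (by simpa using hc), List.getElem_replicate]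
      rw [if_neg (by omega)]
    · have he : n' = k - 1 := by omega
      rw [List.getElem_append_right (by simp [List.length_replicate]; omega)]
      rw [if_pos (Or.inr (by omega))]
      simp

/-- for the factor code with unambiguous symbol `D` on the full 2-shift,
the word `10^{k-1}1` is not in the language of the image iff `D` is purely periodic. -/
theorem statement1 (D : List (Fin 2)) (hk : 0 < D.length) :
    (¬ OccursIn (1 :: (List.replicate (D.length - 1) 0 ++ [1]))
        (unambigCode D '' (Set.univ : Set (ℤ → Fin 2)))) ↔
      ∃ (u : List (Fin 2)) (ℓ : ℕ), 2 ≤ ℓ ∧ D = (List.replicate ℓ u).flatten := by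
  constructor
  · -- forward: prove contrapositive
    intro hno
    by_contra hnp
    apply hno
    set k := D.length with hkdef
    have hkz : (0 : ℤ) < (k : ℤ) := by exact_mod_cast hk
    -- the point x = D^∞
    have pf : ∀ i : ℤ, (i % (k : ℤ)).toNat < k := by
      intro i
      have h1 := Int.emod_nonneg i (Int.natCast_ne_zero.mpr hk.ne')
      have h2 := Int.emod_lt_of_pos i hkz
      omega
    set x : ℤ → Fin 2 := fun i => D.get ⟨(i % (k : ℤ)).toNat, pf i⟩ with hxdef
    have hxcongr : ∀ i j : ℤ, i % (k : ℤ) = j % (k : ℤ) → x i = x j := by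
      intro i j h
      simp only [hxdef]
      exact congrArg D.get (Fin.ext (congrArg Int.toNat h))
    have hx0 : OccursAt D x 0 := by
      intro m
      simp only [hxdef]
      refine (congrArg D.get (Fin.ext ?_)).trans rfl
      have hm : (m : ℤ) < (k : ℤ) := by exact_mod_cast m.isLt
      show ((0 + (m : ℕ) : ℤ) % (k : ℤ)).toNat = (m : ℕ)
      rw [zero_add, Int.emod_eq_of_lt (by positivity) hm]
      simp
    have hxk : OccursAt D x (k : ℤ) := by
      intro m
      have : x ((k : ℤ) + (m : ℕ)) = x (0 + (m : ℕ)) := by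
        apply hxcongr
        have := Int.add_mul_emod_self_left (a := ((m : ℕ) : ℤ)) (b := (k : ℤ)) (c := 1)
        simp only [mul_one] at this
        rw [add_comm, this, zero_add]
      rw [this]; exact hx0 m
    have hnot : ∀ j : ℕ, 0 < j → j < k → ¬ OccursAt D x (j : ℤ) := by
      intro j hj0 hjk hocc
      -- step lemma
      have step : ∀ m, m < k → D[m]? = D[(m + j) % k]? := by
        intro m hm
        have h1 := hocc ⟨m, hm⟩
        simp only [hxdef] at h1
        have hidx : (((j : ℤ) + (m : ℕ)) % (k : ℤ)).toNat = (m + j) % k := by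
          have : ((j : ℤ) + (m : ℕ)) = ((m + j : ℕ) : ℤ) := by push_cast; ring
          rw [this, ← Int.natCast_mod, Int.toNat_natCast]
        refine getElem?_eq_of_get D hm (Nat.mod_lt _ hk) ?_
        rw [← h1]
        exact congrArg D.get (Fin.ext hidx)
      have ht : ∀ t m, m < k → D[m]? = D[(m + t * j) % k]? := by
        intro t
        induction t with
        | zero => intro m hm; rw [Nat.zero_mul, Nat.add_zero, Nat.mod_eq_of_lt hm]
        | succ n ih =>
          intro m hm
          rw [ih m hm, step ((m + n * j) % k) (Nat.mod_lt _ hk), Nat.mod_add_mod]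
          congr 2
          ring
      set g := Nat.gcd j k with hgdef
      have hg0 : 0 < g := Nat.gcd_pos_of_pos_left k hj0
      have hgj : g ≤ j := Nat.gcd_le_left k hj0
      have hgk : g < k := lt_of_le_of_lt hgj hjk
      have hgdvd : g ∣ k := Nat.gcd_dvd_right j k
      -- find t with (t*j) % k = g
      obtain ⟨t, htj⟩ : ∃ t : ℕ, (t * j) % k = g := by
        set a : ℤ := Int.gcdA j k with hadef
        set b : ℤ := Int.gcdB j k with hbdef
        have hbez : (g : ℤ) = (j : ℤ) * a + (k : ℤ) * b := by
          have := Int.gcd_eq_gcd_ab (j : ℤ) (k : ℤ)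
          rwa [Int.gcd_natCast_natCast] at this
        refine ⟨(a % (k : ℤ)).toNat, ?_⟩
        have ht0 : (0 : ℤ) ≤ a % k := Int.emod_nonneg a (by omega)
        have hcast : (((a % (k : ℤ)).toNat : ℤ)) = a % k := Int.toNat_of_nonneg ht0
        have hmodeq : ((a % (k : ℤ)) * j) % k = (g : ℤ) := by
          have h0 : (a % (k : ℤ)) ≡ a [ZMOD (k : ℤ)] := Int.emod_emod_of_dvd a dvd_rfl
          have h1 : (a % (k : ℤ)) * j ≡ a * j [ZMOD (k : ℤ)] := h0.mul_right (j : ℤ)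
          have h2 : a * (j : ℤ) ≡ (g : ℤ) [ZMOD (k : ℤ)] := by
            refine Int.modEq_iff_dvd.mpr ?_
            have hsub : (g : ℤ) - a * j = (k : ℤ) * b := by rw [hbez]; ring
            rw [hsub]
            exact dvd_mul_right _ _
          have h3 := h1.trans h2
          rw [Int.ModEq] at h3
          have h4 : (g : ℤ) % (k : ℤ) = g :=
            Int.emod_eq_of_lt (by positivity) (by exact_mod_cast hgk)
          rw [h4] at h3
          exact h3
        have : (((a % (k : ℤ)).toNat * j : ℕ) : ℤ) % (k : ℤ) = (g : ℤ) := by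
          push_cast
          rw [hcast]
          exact hmodeq
        rw [← Int.natCast_mod] at this
        exact_mod_cast this
      have hgstep : ∀ m, m < k → D[m]? = D[(m + g) % k]? := by
        intro m hm
        rw [ht t m hm]
        congr 1
        have h1 : t * j ≡ g [MOD k] := by
          rw [Nat.ModEq, htj, Nat.mod_eq_of_lt hgk]
        exact h1.add_left m
      have hsimple : ∀ m, m + g < k → D[m]? = D[m + g]? := by
        intro m hm
        rw [hgstep m (by omega), Nat.mod_eq_of_lt hm]
      have key : ∀ m, m < k → D[m]? = D[m % g]? := by
        intro m
        induction m using Nat.strong_induction_on with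
        | _ m ih =>
          intro hm
          by_cases hc : m < g
          · rw [Nat.mod_eq_of_lt hc]
          · push_neg at hc
            rw [Nat.mod_eq_sub_mod hc, ← ih (m - g) (by omega) (by omega)]
            have := hsimple (m - g) (by omega)
            rw [Nat.sub_add_cancel hc] at this
            exact this.symm
      set ℓ : ℕ := k / g with hldef
      have hkgl : ℓ * g = k := Nat.div_mul_cancel hgdvd
      have hl2 : 2 ≤ ℓ := by
        by_contra hle
        push_neg at hle
        have : ℓ * g ≤ 1 * g := Nat.mul_le_mul_right g (by omega)
        omega
      set u : List (Fin 2) := D.take g with hudef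
      have hu : u.length = g := by
        rw [hudef, List.length_take]
        omega
      have final : D = (List.replicate ℓ u).flatten := by
        apply List.ext_getElem?
        intro n
        by_cases hn : n < k
        · rw [flat_get u ℓ n (by rw [hu, hkgl]; exact hn), hu]
          rw [key n hn, hudef, List.getElem?_take, if_pos (Nat.mod_lt _ hg0)]
        · rw [List.getElem?_eq_none (by omega),
            List.getElem?_eq_none (by rw [flat_len, hu, hkgl]; omega)]
      exact hnp ⟨u, ℓ, hl2, final⟩
    -- build the occurrence
    refine ⟨unambigCode D x, ⟨x, Set.mem_univ x, rfl⟩, 0, ?_⟩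
    intro m
    have hmlt : (m : ℕ) < k + 1 := lt_of_lt_of_eq m.isLt (w_len k hk)
    rw [show (1 :: (List.replicate (k - 1) (0 : Fin 2) ++ [1])).get m =
        if (m : ℕ) = 0 ∨ (m : ℕ) = k then 1 else 0 from
      w_get k (m : ℕ) hk (by omega) m.isLt]
    by_cases h0 : (m : ℕ) = 0
    · rw [if_pos (Or.inl h0), h0]
      simpa using code_one hx0
    · by_cases hke : (m : ℕ) = k
      · rw [if_pos (Or.inr hke), hke, zero_add]
        exact code_one hxk
      · rw [if_neg (by tauto), zero_add]
        exact code_zero (hnot m (by omega) (by omega))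
  · -- backward
    rintro ⟨u, ℓ, hℓ, hD⟩ ⟨y, ⟨x, -, rfl⟩, i, hocc⟩
    set k := D.length with hkdef
    set p := u.length with hpdef
    have hlen : k = ℓ * p := by rw [hkdef, hD, flat_len]
    have hp : 0 < p := by
      rcases Nat.eq_zero_or_pos p with h | h
      · rw [h, Nat.mul_zero] at hlen; omega
      · exact h
    have hpk : p < k := by
      have : 2 * p ≤ ℓ * p := Nat.mul_le_mul_right p hℓ
      omega
    have hper : ∀ a b, a < k → b < k → a % p = b % p →
        ∀ (ha : a < D.length) (hb : b < D.length), D.get ⟨a, ha⟩ = D.get ⟨b, hb⟩ := by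
      intro a b hak hbk hab ha hb
      apply get_eq_of_getElem? D ha hb
      have h1 : D[a]? = u[a % p]? := by
        rw [hD]; exact flat_get u ℓ a (by rw [← hpdef]; omega)
      have h2 : D[b]? = u[b % p]? := by
        rw [hD]; exact flat_get u ℓ b (by rw [← hpdef]; omega)
      rw [h1, h2, hab]
    have hw := w_len k hk
    -- extract values
    have hA : OccursAt D x i := by
      have h := hocc ⟨0, by rw [hw]; omega⟩
      rw [w_get k 0 hk (by omega)] at h
      simp only [Nat.cast_zero, add_zero, if_pos (Or.inl rfl)] at h
      exact code_eq_one_iff.mp h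
    have hB : OccursAt D x (i + k) := by
      have h := hocc ⟨k, by rw [hw]; omega⟩
      rw [w_get k k hk (by omega), if_pos (Or.inr rfl)] at h
      exact code_eq_one_iff.mp h
    have hC : ¬ OccursAt D x (i + p) := by
      have h := hocc ⟨p, by rw [hw]; omega⟩
      rw [w_get k p hk (by omega), if_neg (by omega)] at h
      rw [← code_eq_one_iff, h]
      decide
    apply hC
    intro m
    by_cases hc : p + (m : ℕ) < k
    · have h1 := hA ⟨p + (m : ℕ), hc⟩
      have hco : (i + (p : ℤ)) + ((m : ℕ) : ℤ) = i + ((p + (m : ℕ) : ℕ) : ℤ) := by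
        push_cast; ring
      rw [hco, h1]
      exact hper (p + (m : ℕ)) (m : ℕ) hc m.isLt (Nat.add_mod_left p (m : ℕ)) hc m.isLt
    · push_neg at hc
      set r := p + (m : ℕ) - k with hrdef
      have hrk : r < k := by
        have := m.isLt
        omega
      have h1 := hB ⟨r, hrk⟩
      have hnat : p + (m : ℕ) = k + r := by omega
      have hco : (i + (p : ℤ)) + ((m : ℕ) : ℤ) = (i + (k : ℤ)) + ((r : ℕ) : ℤ) := by
        have := congrArg (fun n : ℕ => (n : ℤ)) hnat
        push_cast at this
        omega
      rw [hco, h1]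
      have hmod : r % p = (m : ℕ) % p := by
        calc r % p = (r + ℓ * p) % p := (Nat.add_mul_mod_self_right r ℓ p).symm
          _ = (p + (m : ℕ)) % p := by congr 1; omega
          _ = (m : ℕ) % p := Nat.add_mod_left p (m : ℕ)
      exact hper r (m : ℕ) hrk m.isLt hmod hrk m.isLt
end
end

section
/- Let X = {0,1}^ℤ be the full 2-shift, let D = b_1⋯b_k be a binary k-block, and let φ: X → {0,1}^ℤ be the factor code with unambiguous symbol D, with image Y. Then for every integer j ≥ k, the word 10^j1 belongs to the language B(Y). -/
open Set

noncomputable section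

namespace Stmt2Aux

/-- The sequence `D ++ filler ++ D` (as a function on ℕ). -/
def xseq (B F : ℕ → Fin 2) (k N : ℕ) : ℕ → Fin 2 :=
  fun t => if t < k then B t else if t < N then F (t - k) else B (t - N)

lemma exists_step (I N t r : ℕ) (hN : 0 < N)
    (h : r % Nat.gcd I N = t % Nat.gcd I N) :
    ∃ a : ℕ, (t + a * I) % N = r % N := by
  obtain ⟨e, he⟩ : ((Nat.gcd I N : ℤ)) ∣ (t : ℤ) - r := Nat.ModEq.dvd h
  have hbez : ((Nat.gcd I N : ℤ)) = I * Nat.gcdA I N + N * Nat.gcdB I N :=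
    Nat.gcd_eq_gcd_ab I N
  set aZ : ℤ := -(Nat.gcdA I N * e) with haZ
  have hdvd : (N : ℤ) ∣ (r : ℤ) - ((t : ℤ) + aZ * I) := by
    refine ⟨-(Nat.gcdB I N * e), ?_⟩
    have : (r : ℤ) - t = -(((Nat.gcd I N : ℤ)) * e) := by rw [← he]; ring
    rw [hbez] at this
    calc (r : ℤ) - ((t : ℤ) + aZ * I) = ((r : ℤ) - t) - aZ * I := by ring
    _ = -((I * Nat.gcdA I N + N * Nat.gcdB I N) * e) - aZ * I := by rw [this]
    _ = (N : ℤ) * (-(Nat.gcdB I N * e)) := by rw [haZ]; ring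
  have hNne : (N : ℤ) ≠ 0 := by exact_mod_cast hN.ne'
  set a : ℕ := (aZ % N).toNat with ha
  have haeq : (a : ℤ) = aZ % N := Int.toNat_of_nonneg (Int.emod_nonneg aZ hNne)
  have hcong : (a : ℤ) ≡ aZ [ZMOD N] := by
    rw [haeq]; exact Int.emod_emod_of_dvd aZ dvd_rfl
  have hfin : ((t : ℤ) + a * I) ≡ r [ZMOD N] := by
    have h1 : ((t : ℤ) + a * I) ≡ (t : ℤ) + aZ * I [ZMOD N] :=
      Int.ModEq.add_left _ (hcong.mul_right _)
    have h2 : ((t : ℤ) + aZ * I) ≡ r [ZMOD N] := Int.modEq_iff_dvd.mpr hdvd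
    exact h1.trans h2
  refine ⟨a, ?_⟩
  have : ((t + a * I : ℕ) : ℤ) % (N : ℤ) = ((r : ℕ) : ℤ) % (N : ℤ) := by
    push_cast
    exact hfin
  rw [← Int.natCast_mod, ← Int.natCast_mod] at this
  exact_mod_cast this

lemma walk (B : ℕ → Fin 2) (c : Fin 2) (k m I p' : ℕ)
    (hN : I + p' = k + m) (hm : 0 < m)
    (H1 : ∀ s, s + I < k → B (s + I) = B s)
    (H2 : ∀ u, u + p' < k → B (u + p') = B u)
    (H3 : ∀ s, k ≤ s + I → s < p' → B s = c) :
    ∀ t, t < k → B t ≠ c → ∀ r, r < k + m →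
      r % Nat.gcd I (k + m) = t % Nat.gcd I (k + m) → r < k ∧ B r = B t := by
  intro t htk htc r hrN hrmod
  have SC : ∀ a : ℕ, ∃ t', t' < k ∧ B t' = B t ∧ t' % (k+m) = (t + a*I) % (k+m) := by
    intro a; induction a with
    | zero => exact ⟨t, htk, rfl, by simp⟩
    | succ a ih =>
      obtain ⟨t', h1, h2, h3⟩ := ih
      have hkey : (t' + I) % (k+m) = (t + (a+1)*I) % (k+m) := by
        have e1 : (t' + I) % (k+m) = ((t + a*I) + I) % (k+m) := Nat.ModEq.add_right I h3
        have e2 : t + a*I + I = t + (a+1)*I := by ring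
        rw [e1, e2]
      by_cases hup : t' + I < k
      · exact ⟨t' + I, hup, by rw [H1 t' hup, h2], hkey⟩
      · have hdown : p' ≤ t' := by
          by_contra hlt
          push_neg at hlt
          have := H3 t' (le_of_not_gt hup) hlt
          rw [h2] at this; exact htc this
        refine ⟨t' - p', by omega, ?_, ?_⟩
        · have hH := H2 (t' - p') (by omega)
          rw [show t' - p' + p' = t' by omega] at hH
          rw [← hH, h2]
        · have he : (t' - p') + (k+m) = t' + I := by omega
          calc (t' - p') % (k+m) = ((t' - p') + (k+m)) % (k+m) := (Nat.add_mod_right _ _).symm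
          _ = (t' + I) % (k+m) := by rw [he]
          _ = (t + (a+1)*I) % (k+m) := hkey
  obtain ⟨a, ha⟩ := exists_step I (k+m) t r (by omega) hrmod
  obtain ⟨t', h1, h2, h3⟩ := SC a
  have heq : t' = r := by
    have h4 : t' % (k+m) = r % (k+m) := by rw [h3, ha]
    rwa [Nat.mod_eq_of_lt (by omega), Nat.mod_eq_of_lt hrN] at h4
  rw [← heq]
  exact ⟨h1, h2⟩

end Stmt2Aux

namespace Stmt2Aux

lemma fw (B : ℕ → Fin 2) (c : Fin 2) (k m I p' : ℕ)
    (hN : I + p' = k + m) (hm : 0 < m) (hI0 : 0 < I) (hIk : I < k)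
    (H1 : ∀ s, s + I < k → B (s + I) = B s)
    (H2 : ∀ u, u + p' < k → B (u + p') = B u)
    (H3 : ∀ s, k ≤ s + I → s < p' → B s = c) :
    ∀ s, s < k → B s = B (s % Nat.gcd I (k+m)) := by
  intro s hs
  have hGk : Nat.gcd I (k+m) < k :=
    lt_of_le_of_lt (Nat.le_of_dvd hI0 (Nat.gcd_dvd_left _ _)) hIk
  have hG0 : 0 < Nat.gcd I (k+m) := Nat.gcd_pos_of_pos_left _ hI0
  have hmod : s % Nat.gcd I (k+m) < k := lt_of_lt_of_le (Nat.mod_lt s hG0) hGk.le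
  by_cases hc : B (s % Nat.gcd I (k+m)) = c
  · by_contra hne
    have hBs : B s ≠ c := fun h => hne (h.trans hc.symm)
    obtain ⟨_, h2⟩ := walk B c k m I p' hN hm H1 H2 H3 s hs hBs
      (s % Nat.gcd I (k+m)) (by omega) (Nat.mod_mod_of_dvd s dvd_rfl)
    exact hne h2.symm
  · obtain ⟨_, h2⟩ := walk B c k m I p' hN hm H1 H2 H3
      (s % Nat.gcd I (k+m)) hmod hc s (by omega)
      ((Nat.mod_mod_of_dvd s dvd_rfl).symm)
    exact h2

lemma flipRef (B : ℕ → Fin 2) (k m G : ℕ) (b c : Fin 2)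
    (hk : 0 < k) (hm : 0 < m) (hG0 : 0 < G) (hGk : G < k)
    (hGN : G ∣ (k + m)) (hbc : c ≠ b) (hbval : B (k-1) = b)
    (hQ : ∀ s, s < k → B s = B (s % G))
    (hQc : ∀ r, r < m → B ((k + r) % G) = c) :
    ∀ I, 1 ≤ I → I < k + m →
      ¬ (∀ s, s < k → xseq B (fun rr => if rr = m - 1 then b else c) k (k + m) (I + s) = B s) := by
  intro I hI1 hIN hocc
  set N := k + m with hNdef
  set F : ℕ → Fin 2 := fun rr => if rr = m - 1 then b else c with hF
  set Q : ℕ → Fin 2 := fun u => B (u % G) with hQdef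
  have hQmod : ∀ u v : ℕ, u % G = v % G → Q u = Q v := by
    intro u v h; simp only [hQdef, h]
  -- xseq agrees with Q away from the flipped position N-1
  have hxQ : ∀ p, p < N + k → p ≠ N - 1 → xseq B F k N p = Q p := by
    intro p h1 h2
    rcases lt_or_ge p k with h | h
    · rw [xseq, if_pos h]; exact hQ p h
    rcases lt_or_ge p N with h' | h'
    · rw [xseq, if_neg (by omega), if_pos h']
      have hFc : F (p - k) = c := by
        simp only [hF]; rw [if_neg (by omega)]
      rw [hFc]
      have hpk : k + (p - k) = p := by omega
      have hval := hQc (p - k) (by omega)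
      rw [hpk] at hval
      exact hval.symm
    · rw [xseq, if_neg (by omega), if_neg (by omega)]
      have h3 : p - N < k := by omega
      rw [hQ (p - N) h3]
      apply hQmod
      obtain ⟨e, he⟩ := hGN
      have hpe : p = (p - N) + G * e := by omega
      conv_rhs => rw [hpe]
      rw [Nat.add_mul_mod_self_left]
  rcases lt_or_ge I m with hsmall | hbig
  · -- I < m : occurrence at s = k-1 yields c = b
    have h := hocc (k-1) (by omega)
    rw [xseq, if_neg (by omega), if_pos (by omega)] at h
    have hFc : F (I + (k-1) - k) = c := by
      simp only [hF]; rw [if_neg (by omega)]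
    rw [hFc, hbval] at h
    exact hbc h
  · -- I ≥ m
    set d := I % G with hd
    have hdI : I % G = d % G := (Nat.mod_mod_of_dvd I dvd_rfl).symm
    set sN := N - 1 - I with hsN
    have hsNk : sN < k := by omega
    have hsNrel : I + sN = N - 1 := by omega
    have hE2 : Q sN = b := by
      have h := hocc sN hsNk
      rw [hsNrel] at h
      rw [xseq, if_neg (by omega), if_pos (by omega)] at h
      have hFb : F (N - 1 - k) = b := by
        simp only [hF]; rw [if_pos (by omega)]
      rw [hFb] at h
      show B (sN % G) = b
      rw [← hQ sN hsNk]
      exact h.symm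
    have hID : ∀ u : ℕ, u % G ≠ sN % G → Q (u + d) = Q u := by
      intro u hu
      have hsk : u % G < k := lt_of_lt_of_le (Nat.mod_lt u hG0) hGk.le
      have h := hocc (u % G) hsk
      have hne : I + u % G ≠ N - 1 := by
        intro hEq
        apply hu
        have h5 : u % G = sN := by omega
        rw [← h5]
        exact (Nat.mod_mod_of_dvd u dvd_rfl).symm
      rw [hxQ (I + u % G) (by omega) hne] at h
      have hQu : B (u % G) = Q u := rfl
      have hIu : Q (I + u % G) = Q (u + d) := by
        apply hQmod
        calc (I + u % G) % G = (d + u % G) % G := Nat.ModEq.add_right _ hdI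
        _ = (d + u) % G := Nat.ModEq.add_left _ (Nat.mod_mod_of_dvd u dvd_rfl)
        _ = (u + d) % G := by rw [Nat.add_comm]
      rw [hIu] at h
      rw [h]
    have hTex : ∃ a, 0 < a ∧ (a * d) % G = 0 := ⟨G, hG0, Nat.mul_mod_right G d⟩
    set T := Nat.find hTex with hT
    obtain ⟨hT0, hTd⟩ := Nat.find_spec hTex
    have anchor : Q (N - 1) = c := by
      have h9 : k + (m-1) = N - 1 := by omega
      have hval := hQc (m-1) (by omega)
      rw [h9] at hval
      exact hval
    have CH : ∀ a, a ≤ T - 1 → Q (N - 1 + a * d) = c := by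
      intro a
      induction a with
      | zero => intro _; simpa using anchor
      | succ a ih =>
        intro ha
        have hrec := ih (by omega)
        have harith : N - 1 + (a+1) * d = (N - 1 + a * d) + d := by ring
        have hside : (N - 1 + a * d) % G ≠ sN % G := by
          intro hEq
          have hc1 : ((N - 1 + a*d) + d) % G = (sN + d) % G := Nat.ModEq.add_right d hEq
          have hc2 : (sN + d) % G = (sN + I) % G := Nat.ModEq.add_left sN hdI.symm
          have hc3 : ((N - 1) + ((a+1) * d)) % G = (N - 1) % G := by
            have e : (N - 1) + ((a+1) * d) = (N - 1 + a*d) + d := by ring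
            rw [e, hc1, hc2, Nat.add_comm sN I, hsNrel]
          have hc4 : ((a+1) * d) % G = 0 := by
            have h0 : (N-1) + ((a+1)*d) ≡ (N-1) + 0 [MOD G] := by
              rw [Nat.add_zero]; exact hc3
            have h5 := Nat.ModEq.add_left_cancel' (N-1) h0
            simpa [Nat.ModEq] using h5
          exact (Nat.find_min hTex (m := a+1) (by omega)) ⟨by omega, hc4⟩
        rw [harith, hID (N - 1 + a * d) hside]
        exact hrec
    have hfin : Q sN = Q (N - 1 + (T-1) * d) := by
      apply hQmod
      have he : (N - 1 + (T-1)*d) + d = (N-1) + T * d := by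
        have h9 : (T-1) + 1 = T := by omega
        calc (N - 1 + (T-1)*d) + d = (N-1) + ((T-1) + 1) * d := by ring
        _ = (N-1) + T * d := by rw [h9]
      have h1 : (sN + d) % G = ((N - 1 + (T-1)*d) + d) % G := by
        rw [he]
        have hTd' : T * d ≡ 0 [MOD G] := by
          show (T * d) % G = 0 % G
          simpa using hTd
        calc (sN + d) % G = (sN + I) % G := Nat.ModEq.add_left sN hdI.symm
        _ = (N - 1) % G := by rw [Nat.add_comm sN I, hsNrel]
        _ = ((N-1) + T * d) % G := by
            have h8 : (N - 1 + T*d) % G = (N-1) % G := by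
              have h := Nat.ModEq.add_left (N-1) hTd'; rw [Nat.add_zero] at h; exact h
            exact h8.symm
      exact Nat.ModEq.add_right_cancel' d h1
    rw [hE2, CH (T-1) le_rfl] at hfin
    exact hbc hfin.symm

end Stmt2Aux

namespace Stmt2Aux

lemma fin2_succ_ne : ∀ v : Fin 2, v + 1 ≠ v := by decide

theorem core (k m : ℕ) (hk : 0 < k) (hm : 0 < m) (B : ℕ → Fin 2) :
    ∃ F : ℕ → Fin 2, ∀ I, 1 ≤ I → I < k + m →
      ¬ (∀ s, s < k → xseq B F k (k + m) (I + s) = B s) := by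
  classical
  set b := B (k-1) with hbdef
  set c := b + 1 with hcdef
  have hbc : c ≠ b := fin2_succ_ne b
  by_cases hp : ∀ I, 1 ≤ I → I < k + m →
      ¬ (∀ s, s < k → xseq B (fun _ => c) k (k + m) (I + s) = B s)
  · exact ⟨fun _ => c, hp⟩
  push_neg at hp
  obtain ⟨I, hI1, hIN, hocc⟩ := hp
  have F1 : ∀ s, I + s < k → B (I + s) = B s := by
    intro s hs
    have h := hocc s (by omega)
    rwa [xseq, if_pos hs] at h
  have F2 : ∀ s, s < k → k ≤ I + s → I + s < k + m → B s = c := by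
    intro s hsk h1 h2
    have h := hocc s hsk
    rw [xseq, if_neg (by omega), if_pos h2] at h
    exact h.symm
  have F3 : ∀ s, s < k → k + m ≤ I + s → B (I + s - (k+m)) = B s := by
    intro s hsk h1
    have h := hocc s hsk
    rwa [xseq, if_neg (by omega), if_neg (by omega)] at h
  have hIm : m + 1 ≤ I := by
    by_contra h
    push_neg at h
    have hcb : B (k-1) = c := F2 (k-1) (by omega) (by omega) (by omega)
    exact hbc (hcb ▸ rfl)
  have hIk : I ≤ k - 1 := by
    by_contra h
    push_neg at h
    have hall : ∀ s, s < k → B s = c := by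
      intro s
      induction s using Nat.strong_induction_on with
      | _ s ih =>
        intro hsk
        by_cases hcase : I + s < k + m
        · exact F2 s hsk (by omega) hcase
        · have h3 := F3 s hsk (by omega)
          have hlt : I + s - (k+m) < s := by omega
          rw [← h3]
          exact ih _ hlt (by omega)
    exact hbc ((hall (k-1) (by omega)).symm)
  -- now m+1 ≤ I ≤ k-1 ; set p' := k+m-I
  set p' := k + m - I with hp'def
  have hNsum : I + p' = k + m := by omega
  have H1 : ∀ s, s + I < k → B (s + I) = B s := by
    intro s hs
    rw [Nat.add_comm s I]
    exact F1 s (by omega)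
  have H2 : ∀ u, u + p' < k → B (u + p') = B u := by
    intro u hu
    have h := F3 (u + p') (by omega) (by omega)
    rw [show I + (u + p') - (k+m) = u by omega] at h
    exact h.symm
  have H3 : ∀ s, k ≤ s + I → s < p' → B s = c := by
    intro s h1 h2
    exact F2 s (by omega) (by omega) (by omega)
  set G := Nat.gcd I (k+m) with hGdef
  have hG0 : 0 < G := Nat.gcd_pos_of_pos_left _ (by omega)
  have hGI : G ∣ I := Nat.gcd_dvd_left _ _
  have hGN : G ∣ (k + m) := Nat.gcd_dvd_right _ _
  have hGk : G < k := lt_of_le_of_lt (Nat.le_of_dvd (by omega) hGI) (by omega)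
  have hQ : ∀ s, s < k → B s = B (s % G) :=
    fw B c k m I p' hNsum hm (by omega) (by omega) H1 H2 H3
  have hQc : ∀ r, r < m → B ((k + r) % G) = c := by
    intro r hr
    obtain ⟨e, he⟩ := hGI
    have h1 : (k + r) % G = (k - I + r) % G := by
      have h2 : k + r = (k - I + r) + G * e := by omega
      rw [h2, Nat.add_mul_mod_self_left]
    rw [h1, ← hQ (k - I + r) (by omega)]
    exact H3 (k - I + r) (by omega) (by omega)
  exact ⟨fun rr => if rr = m - 1 then b else c,
    flipRef B k m G b c hk hm hG0 hGk hGN hbc rfl hQ hQc⟩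

end Stmt2Aux

/-- for the factor code with unambiguous symbol `D` on the full 2-shift,
the word `10^j1` is in the language of the image for every `j ≥ k`. -/
theorem statement2 (D : List (Fin 2)) (hk : 0 < D.length) (j : ℕ) (hj : D.length ≤ j) :
    OccursIn (1 :: (List.replicate j 0 ++ [1]))
      (unambigCode D '' (Set.univ : Set (ℤ → Fin 2))) := by
  classical
  obtain ⟨F, hF⟩ := Stmt2Aux.core D.length (j + 1 - D.length) hk (by omega)
      (fun s => D.getD s 0)
  set k := D.length with hkdef
  set m := j + 1 - k with hmdef
  set B : ℕ → Fin 2 := fun s => D.getD s 0 with hBdef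
  have hNj : k + m = j + 1 := by omega
  set xx : ℤ → Fin 2 := fun t => Stmt2Aux.xseq B F k (k + m) t.toNat with hxdef
  have hBD : ∀ (κ : Fin D.length), B (κ : ℕ) = D.get κ := by
    intro κ
    show D.getD (↑κ) 0 = D.get κ
    rw [List.getD_eq_getElem D 0 κ.isLt, List.get_eq_getElem]
  have hOcc0 : OccursAt D xx 0 := by
    intro κ
    show Stmt2Aux.xseq B F k (k+m) (((0:ℤ) + ((κ:ℕ):ℤ)).toNat) = D.get κ
    rw [show ((0:ℤ) + ((κ:ℕ):ℤ)).toNat = (κ:ℕ) by simp]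
    rw [Stmt2Aux.xseq, if_pos (show (κ:ℕ) < k from κ.isLt)]
    exact hBD κ
  have hOccN : OccursAt D xx ((k+m : ℕ) : ℤ) := by
    intro κ
    show Stmt2Aux.xseq B F k (k+m) ((((k+m:ℕ):ℤ) + ((κ:ℕ):ℤ)).toNat) = D.get κ
    rw [show (((k+m:ℕ):ℤ) + ((κ:ℕ):ℤ)).toNat = k + m + (κ:ℕ) by omega]
    rw [Stmt2Aux.xseq, if_neg (by omega), if_neg (by omega),
      show k + m + (κ:ℕ) - (k+m) = (κ:ℕ) by omega]
    exact hBD κ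
  have hmid : ∀ r : ℕ, r < j → ¬ OccursAt D xx (((1+r : ℕ) : ℤ)) := by
    intro r hr hOc
    refine hF (1 + r) (by omega) (by omega) ?_
    intro s hs
    have h := hOc ⟨s, hs⟩
    rw [show ((((1+r:ℕ)):ℤ) + ((((⟨s, hs⟩ : Fin D.length) : ℕ)):ℤ)) = (((1+r+s : ℕ)):ℤ) by push_cast; ring] at h
    have h2 : Stmt2Aux.xseq B F k (k+m) (((1+r+s : ℕ):ℤ)).toNat = D.get ⟨s, hs⟩ := h
    rw [show (((1+r+s : ℕ):ℤ)).toNat = 1+r+s by omega] at h2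
    rw [h2]
    exact (hBD ⟨s, hs⟩).symm
  refine ⟨unambigCode D xx, ⟨xx, Set.mem_univ _, rfl⟩, 0, ?_⟩
  intro kk
  obtain ⟨n, hn⟩ := kk
  have hn' : n < j + 2 := by simp at hn; omega
  match n, hn' with
  | 0, _ =>
    show unambigCode D xx (0 + ((0:ℕ):ℤ)) = _
    rw [show ((0:ℤ) + ((0:ℕ):ℤ)) = 0 by norm_num]
    show (if OccursAt D xx 0 then (1 : Fin 2) else 0) = _
    rw [if_pos hOcc0]
    rfl
  | (r+1), hr1 =>
    have hget : (1 :: (List.replicate j (0 : Fin 2) ++ [1])).get ⟨r+1, hn⟩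
        = if r < j then 0 else 1 := by
      by_cases hcase : r < j
      · rw [if_pos hcase, List.get_eq_getElem, List.getElem_cons_succ,
          List.getElem_append_left (by simpa using hcase)]
        simp
      · have hrj : r = j := by omega
        subst hrj
        rw [if_neg hcase, List.get_eq_getElem, List.getElem_cons_succ,
          List.getElem_append_right (by simp)]
        simp
    rw [hget]
    by_cases hcase : r < j
    · rw [if_pos hcase]
      show (if OccursAt D xx ((0:ℤ) + ((r+1 : ℕ):ℤ)) then (1:Fin 2) else 0) = 0
      rw [show ((0:ℤ) + ((r+1 : ℕ):ℤ)) = (((1+r : ℕ)):ℤ) by push_cast; ring]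
      rw [if_neg (hmid r hcase)]
    · have hrj : r = j := by omega
      rw [if_neg hcase]
      show (if OccursAt D xx ((0:ℤ) + ((r+1 : ℕ):ℤ)) then (1:Fin 2) else 0) = 1
      rw [show ((0:ℤ) + ((r+1 : ℕ):ℤ)) = (((k+m : ℕ)):ℤ) by rw [hNj, hrj]; push_cast; ring]
      rw [if_pos hOccN]
end
end

section
/- Let φ: X_[2] → Y be the factor code with unambiguous symbol D = b_1⋯b_k defined on the full 2-shift X_[2] = {0,1}^ℤ, let S ⊆ ℤ_{≥0} be such that Y = X(S), let ℱ be the standard forbidden set of Y and ℱ̄ its bitwise complement. Then the following are equivalent: (1) at least one of the symbols 0, 1 occurs at most once in D; (2) φ restricted to X_ℱ or φ restricted to X_ℱ̄ is one-to-one and onto Y; (3) φ restricted to X_ℱ or φ restricted to X_ℱ̄ is finite-to-one and onto Y; (4) φ restricted to X_ℱ or φ restricted to X_ℱ̄ is onto Y. -/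
open Set

noncomputable section

/-- The word `10^m1`. -/
def gapWord (m : ℕ) : List (Fin 2) := 1 :: (List.replicate m 0 ++ [1])

/-- The standard forbidden set of the `S`-gap shift (for `S` finite or cofinite):
`{10^m1 : m ∈ {0,…,max S} \ S} ∪ {0^{1+max S}}` when `S` is finite, and
`{10^m1 : m ∈ ℕ \ S}` when `S` is cofinite. -/
def stdForbidden (S : Set ℕ) : Set (List (Fin 2)) :=
  @ite _ S.Finite (Classical.propDecidable _)
    ((gapWord '' ({m | m ≤ sSup S} \ S)) ∪ {List.replicate (1 + sSup S) 0})
    (gapWord '' Sᶜ)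

/-- Exchanging the two symbols of the binary alphabet. -/
def bitCompl : Fin 2 → Fin 2 := fun b => if b = 0 then 1 else 0

/-- The bitwise complement of a set of binary words. -/
def complWords (F : Set (List (Fin 2))) : Set (List (Fin 2)) :=
  (List.map bitCompl) '' F

section INFRA

-- Fin 2 basics
lemma fin2_cases (v : Fin 2) : v = 0 ∨ v = 1 := by
  rcases v with ⟨v, hv⟩
  interval_cases v
  · exact Or.inl rfl
  · exact Or.inr rfl

lemma fin2_ne_one {v : Fin 2} (h : v ≠ 1) : v = 0 := by
  rcases fin2_cases v with h0 | h1
  · exact h0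
  · exact absurd h1 h

lemma fin2_ne_zero {v : Fin 2} (h : v ≠ 0) : v = 1 := by
  rcases fin2_cases v with h0 | h1
  · exact absurd h0 h
  · exact h1

lemma fin2_one_ne_zero : (1 : Fin 2) ≠ 0 := by decide

-- indicator
noncomputable def ind (P : Prop) : Fin 2 := @ite _ P (Classical.propDecidable P) 1 0

lemma ind_pos {P : Prop} (h : P) : ind P = 1 := by
  unfold ind; rw [if_pos h]

lemma ind_neg {P : Prop} (h : ¬ P) : ind P = 0 := by
  unfold ind; rw [if_neg h]

lemma ind_eq_one_iff {P : Prop} : ind P = 1 ↔ P := by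
  by_cases h : P
  · rw [ind_pos h]; simp [h]
  · rw [ind_neg h]; simp [h]

lemma ind_eq_zero_iff {P : Prop} : ind P = 0 ↔ ¬ P := by
  by_cases h : P
  · rw [ind_pos h]; simp [h]
  · rw [ind_neg h]; simp [h]

end INFRA

section INFRA2

/-- evaluation of a word as a bi-infinite sequence supported on `[0, length)` -/
noncomputable def listFun (D : List (Fin 2)) : ℤ → Fin 2 :=
  fun p => if h : 0 ≤ p ∧ p < D.length then D.get ⟨p.toNat, by omega⟩ else 0

lemma listFun_of {D : List (Fin 2)} {p : ℤ} (h1 : 0 ≤ p) (h2 : p < D.length) :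
    ∀ (hp : p.toNat < D.length), listFun D p = D.get ⟨p.toNat, hp⟩ := by
  intro hp
  unfold listFun
  rw [dif_pos ⟨h1, h2⟩]

lemma listFun_neg {D : List (Fin 2)} {p : ℤ} (h : p < 0) : listFun D p = 0 := by
  unfold listFun
  rw [dif_neg]; omega

lemma listFun_ge {D : List (Fin 2)} {p : ℤ} (h : (D.length : ℤ) ≤ p) : listFun D p = 0 := by
  unfold listFun
  rw [dif_neg]; omega

lemma occursAt_iff {D : List (Fin 2)} {x : ℤ → Fin 2} {i : ℤ} :
    OccursAt D x i ↔ ∀ p : ℤ, i ≤ p → p < i + D.length → x p = listFun D (p - i) := by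
  constructor
  · intro h p h1 h2
    have hlt : (p - i).toNat < D.length := by omega
    have := h ⟨(p - i).toNat, hlt⟩
    rw [listFun_of (by omega) (by omega) hlt]
    rw [show i + (((p - i).toNat : ℕ) : ℤ) = p by omega] at this
    exact this
  · intro h ⟨j, hj⟩
    have := h (i + j) (by omega) (by omega)
    rw [listFun_of (by omega) (by omega) (by omega : (i + j - i).toNat < D.length)] at this
    simpa [show (i + (j:ℤ) - i).toNat = j by omega] using this

lemma code_eq_one {D : List (Fin 2)} {x : ℤ → Fin 2} {i : ℤ} :
    unambigCode D x i = 1 ↔ OccursAt D x i := by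
  unfold unambigCode
  by_cases h : OccursAt D x i
  · rw [if_pos h]; simp [h]
  · rw [if_neg h]; simp [h]

lemma code_eq_zero {D : List (Fin 2)} {x : ℤ → Fin 2} {i : ℤ} :
    unambigCode D x i = 0 ↔ ¬ OccursAt D x i := by
  unfold unambigCode
  by_cases h : OccursAt D x i
  · rw [if_pos h]; simp [h]
  · rw [if_neg h]; simp [h]

end INFRA2

section INFRA3

lemma gapWord_length (m : ℕ) : (gapWord m).length = m + 2 := by
  simp [gapWord]

lemma gapWord_get (m : ℕ) (j : ℕ) (h : j < (gapWord m).length) :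
    (gapWord m).get ⟨j, h⟩ = if j = 0 ∨ j = m + 1 then 1 else 0 := by
  rw [gapWord_length] at h
  rcases j with _ | t
  · simp [gapWord]
  · have h2 : t < m + 1 := by omega
    simp only [gapWord, List.get_eq_getElem, List.getElem_cons_succ]
    by_cases ht : t < m
    · rw [List.getElem_append_left (by simpa using ht)]
      rw [List.getElem_replicate]
      rw [if_neg (by omega)]
    · have : t = m := by omega
      subst this
      rw [List.getElem_append_right (by simp)]
      rw [if_pos (Or.inr rfl)]
      simp

lemma listFun_gapWord (m : ℕ) (q : ℤ) (h1 : 0 ≤ q) (h2 : q < m + 2) :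
    listFun (gapWord m) q = if q = 0 ∨ q = m + 1 then 1 else 0 := by
  have hq : q.toNat < (gapWord m).length := by rw [gapWord_length]; omega
  rw [listFun_of h1 (by rw [gapWord_length]; push_cast; omega) hq, gapWord_get]
  by_cases hc : q = 0 ∨ q = m + 1
  · rw [if_pos hc, if_pos (by omega)]
  · rw [if_neg hc, if_neg (by omega)]

lemma occursAt_gapWord {m : ℕ} {x : ℤ → Fin 2} {i : ℤ} :
    OccursAt (gapWord m) x i ↔
      x i = 1 ∧ x (i + m + 1) = 1 ∧ ∀ l : ℤ, i < l → l < i + m + 1 → x l = 0 := by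
  rw [occursAt_iff]
  have hlen : ((gapWord m).length : ℤ) = m + 2 := by rw [gapWord_length]; push_cast; ring
  constructor
  · intro h
    refine ⟨?_, ?_, ?_⟩
    · have := h i (le_refl _) (by omega)
      rwa [listFun_gapWord m _ (by omega) (by omega), if_pos (by omega)] at this
    · have := h (i + m + 1) (by omega) (by omega)
      rwa [listFun_gapWord m _ (by omega) (by omega), if_pos (by omega)] at this
    · intro l hl1 hl2
      have := h l (by omega) (by omega)
      rwa [listFun_gapWord m _ (by omega) (by omega), if_neg (by omega)] at this
  · rintro ⟨h1, h2, h3⟩ p hp1 hp2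
    rw [hlen] at hp2
    rw [listFun_gapWord m _ (by omega) (by omega)]
    by_cases hc : p - i = 0 ∨ p - i = m + 1
    · rw [if_pos hc]
      rcases hc with hc | hc
      · rw [show p = i by omega]; exact h1
      · rw [show p = i + m + 1 by omega]; exact h2
    · rw [if_neg hc]
      exact h3 p (by omega) (by omega)

lemma stdForbidden_of_infinite {S : Set ℕ} (hS : S.Infinite) :
    stdForbidden S = gapWord '' Sᶜ := by
  unfold stdForbidden
  rw [if_neg hS]

/-- membership in the SFT given by the standard forbidden set, for infinite `S` -/
lemma mem_forbid {S : Set ℕ} (hS : S.Infinite) {x : ℤ → Fin 2} :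
    x ∈ ForbidSet (stdForbidden S) ↔
      ∀ i j : ℤ, i < j → x i = 1 → x j = 1 →
        (∀ l : ℤ, i < l → l < j → x l = 0) → (j - i - 1).toNat ∈ S := by
  rw [stdForbidden_of_infinite hS]
  constructor
  · intro h i j hij h1 h2 h3
    by_contra hm
    have hocc : OccursAt (gapWord (j - i - 1).toNat) x i := by
      rw [occursAt_gapWord]
      exact ⟨h1, by rw [show i + ((j - i - 1).toNat : ℤ) + 1 = j by omega]; exact h2,
        fun l hl1 hl2 => h3 l hl1 (by omega)⟩
    exact h _ ⟨(j - i - 1).toNat, hm, rfl⟩ i hocc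
  · intro h w hw i hocc
    obtain ⟨m, hm, rfl⟩ := hw
    rw [occursAt_gapWord] at hocc
    obtain ⟨h1, h2, h3⟩ := hocc
    have := h i (i + m + 1) (by omega) h1 h2 h3
    rw [show (i + m + 1 - i - 1).toNat = m by omega] at this
    exact hm this

/-- least one after `t`, given a one at `R > t` -/
lemma nextOne_aux (x : ℤ → Fin 2) :
    ∀ n : ℕ, ∀ t R : ℤ, (R - t).toNat ≤ n → t < R → x R = 1 →
      ∃ q : ℤ, t < q ∧ q ≤ R ∧ x q = 1 ∧ ∀ l : ℤ, t < l → l < q → x l = 0 := by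
  intro n
  induction n with
  | zero => intro t R h1 h2 _; omega
  | succ n ih =>
    intro t R h1 h2 hR
    by_cases hz : ∀ l : ℤ, t < l → l < R → x l = 0
    · exact ⟨R, h2, le_refl _, hR, hz⟩
    · push_neg at hz
      obtain ⟨l, hl1, hl2, hl3⟩ := hz
      obtain ⟨q, hq1, hq2, hq3, hq4⟩ := ih t l (by omega) hl1 (fin2_ne_zero hl3)
      exact ⟨q, hq1, by omega, hq3, hq4⟩

lemma nextOne {x : ℤ → Fin 2} {t R : ℤ} (h2 : t < R) (hR : x R = 1) :
    ∃ q : ℤ, t < q ∧ q ≤ R ∧ x q = 1 ∧ ∀ l : ℤ, t < l → l < q → x l = 0 :=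
  nextOne_aux x (R - t).toNat t R (le_refl _) h2 hR

lemma consecOnes {x : ℤ → Fin 2} {i j : ℤ} (hij : i < j) (h1 : x i = 1) (h2 : x j = 1) :
    ∃ p q : ℤ, i ≤ p ∧ p < q ∧ q ≤ j ∧ x p = 1 ∧ x q = 1 ∧
      ∀ l : ℤ, p < l → l < q → x l = 0 := by
  obtain ⟨q, hq1, hq2, hq3, hq4⟩ := nextOne hij h2
  exact ⟨i, q, le_refl _, hq1, hq2, h1, hq3, hq4⟩

end INFRA3

section INFRA4

lemma phi_mem {D : List (Fin 2)} {S : Set ℕ}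
    (hYS : unambigCode D '' (Set.univ : Set (ℤ → Fin 2)) = GapShift S)
    (x : ℤ → Fin 2) : unambigCode D x ∈ GapShift S := by
  rw [← hYS]; exact Set.mem_image_of_mem _ (Set.mem_univ x)

lemma exists_preimage {D : List (Fin 2)} {S : Set ℕ}
    (hYS : unambigCode D '' (Set.univ : Set (ℤ → Fin 2)) = GapShift S)
    {y : ℤ → Fin 2} (hy : y ∈ GapShift S) : ∃ x : ℤ → Fin 2, unambigCode D x = y := by
  rw [← hYS] at hy
  obtain ⟨x, _, hx⟩ := hy
  exact ⟨x, hx⟩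

lemma listFun_one_char {D : List (Fin 2)} {q : ℤ} :
    listFun D q = 1 ↔ 0 ≤ q ∧ q < D.length ∧
      ∃ hq : q.toNat < D.length, D.get ⟨q.toNat, hq⟩ = 1 := by
  constructor
  · intro h
    have h1 : 0 ≤ q := by
      by_contra hc
      rw [listFun_neg (by omega)] at h
      exact fin2_one_ne_zero h.symm
    have h2 : q < D.length := by
      by_contra hc
      rw [listFun_ge (by omega)] at h
      exact fin2_one_ne_zero h.symm
    have hq : q.toNat < D.length := by omega
    rw [listFun_of h1 h2 hq] at h
    exact ⟨h1, h2, hq, h⟩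
  · rintro ⟨h1, h2, hq, h⟩
    rw [listFun_of h1 h2 hq]
    exact h

/-- the big-gap lemma : all gaps `≥ 2k - 1` belong to `S` -/
lemma bigGaps {D : List (Fin 2)} {S : Set ℕ}
    (hYS : unambigCode D '' (Set.univ : Set (ℤ → Fin 2)) = GapShift S)
    (hone : ∃ j : ℕ, ∃ hj : j < D.length, D.get ⟨j, hj⟩ = 1) :
    ∀ m : ℕ, 2 * D.length - 1 ≤ m → m ∈ S := by
  classical
  intro m hm
  set k := D.length with hk
  have hk1 : 1 ≤ k := by
    obtain ⟨j, hj, _⟩ := hone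
    omega
  set t : ℤ := (m : ℤ) + 1 with ht
  have ht2k : 2 * (k : ℤ) ≤ t := by omega
  set T : Finset ℕ := (Finset.range k).filter (fun j => listFun D (j : ℤ) = 1) with hT
  have hTmem : ∀ j : ℕ, j ∈ T ↔ j < k ∧ listFun D (j : ℤ) = 1 := by
    intro j; simp [hT]
  have hTne : T.Nonempty := by
    obtain ⟨j, hj, hj1⟩ := hone
    refine ⟨j, (hTmem j).2 ⟨hj, ?_⟩⟩
    rw [listFun_of (by omega) (by omega) (by simpa using hj)]
    simpa using hj1
  set o₁ : ℕ := T.min' hTne with ho₁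
  set o₂ : ℕ := T.max' hTne with ho₂
  have ho₁T := (hTmem _).1 (T.min'_mem hTne)
  have ho₂T := (hTmem _).1 (T.max'_mem hTne)
  have hcharT : ∀ q : ℤ, listFun D q = 1 → 0 ≤ q ∧ q < k ∧
      o₁ ≤ q ∧ q ≤ o₂ := by
    intro q hq
    obtain ⟨h1, h2, hq', hget⟩ := listFun_one_char.1 hq
    have : q.toNat ∈ T := by
      rw [hTmem]
      constructor
      · omega
      · rw [show ((q.toNat : ℕ) : ℤ) = q by omega]; exact hq
    have hmin := T.min'_le _ this
    have hmax := T.le_max' _ this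
    refine ⟨h1, h2, by omega, by omega⟩
  set x : ℤ → Fin 2 := fun p => ind (listFun D p = 1 ∨ listFun D (p - t) = 1) with hx
  have hocc0 : OccursAt D x 0 := by
    rw [occursAt_iff]
    intro p hp1 hp2
    rw [zero_add] at hp2
    rw [show p - 0 = p by ring]
    rcases fin2_cases (listFun D p) with hv | hv
    · rw [hv, hx]
      apply ind_neg
      rintro (hc | hc)
      · rw [hv] at hc; exact fin2_one_ne_zero hc.symm
      · obtain ⟨hc1, _, _⟩ := (hcharT _ hc)
        omega
    · rw [hv, hx]
      exact ind_pos (Or.inl hv)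
  have hocct : OccursAt D x t := by
    rw [occursAt_iff]
    intro p hp1 hp2
    rcases fin2_cases (listFun D (p - t)) with hv | hv
    · rw [hv, hx]
      apply ind_neg
      rintro (hc | hc)
      · obtain ⟨_, hc2, _⟩ := (hcharT _ hc)
        omega
      · rw [hv] at hc; exact fin2_one_ne_zero hc.symm
    · rw [hv, hx]
      exact ind_pos (Or.inr hv)
  have hno : ∀ i : ℤ, 0 < i → i < t → ¬ OccursAt D x i := by
    intro i hi1 hi2 hocc
    rw [occursAt_iff] at hocc
    have h2 := hocc (i + o₂) (by omega) (by omega)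
    rw [show i + (o₂ : ℤ) - i = (o₂ : ℤ) by ring, ho₂T.2] at h2
    rw [hx] at h2
    rcases ind_eq_one_iff.1 h2 with hc | hc
    · obtain ⟨_, _, _, hle⟩ := hcharT _ hc
      omega
    · obtain ⟨hge, _, _, _⟩ := hcharT _ hc
      have hik : (k : ℤ) + 1 ≤ i := by omega
      have h1 := hocc (i + o₁) (by omega) (by omega)
      rw [show i + (o₁ : ℤ) - i = (o₁ : ℤ) by ring, ho₁T.2] at h1
      rw [hx] at h1
      rcases ind_eq_one_iff.1 h1 with hd | hd
      · obtain ⟨_, hlt, _, _⟩ := hcharT _ hd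
        omega
      · obtain ⟨_, _, hge2, _⟩ := hcharT _ hd
        omega
  have hy := phi_mem hYS x
  have h01 : unambigCode D x 0 = 1 := code_eq_one.2 hocc0
  have ht1 : unambigCode D x t = 1 := code_eq_one.2 hocct
  have hz : ∀ l : ℤ, 0 < l → l < t → unambigCode D x l = 0 :=
    fun l h1 h2 => code_eq_zero.2 (hno l h1 h2)
  have := hy.1 0 t (by omega) h01 ht1 hz
  rw [show (t - 0 - 1).toNat = m by omega] at this
  exact this

lemma S_infinite {D : List (Fin 2)} {S : Set ℕ}
    (hYS : unambigCode D '' (Set.univ : Set (ℤ → Fin 2)) = GapShift S)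
    (hone : ∃ j : ℕ, ∃ hj : j < D.length, D.get ⟨j, hj⟩ = 1) : S.Infinite := by
  exact Set.infinite_of_injective_forall_mem
    (f := fun n : ℕ => 2 * D.length - 1 + n)
    (fun a b hab => by simpa using hab)
    (fun a => bigGaps hYS hone _ (Nat.le_add_right _ _))

/-- the periodic point with all gaps equal to `m` lies in `GapShift S` when `m ∈ S` -/
lemma periodicPoint_mem {S : Set ℕ} (hS : S.Infinite) {m : ℕ} (hm : m ∈ S) :
    (fun i : ℤ => ind (i % ((m : ℤ) + 1) = 0)) ∈ GapShift S := by
  set d : ℤ := (m : ℤ) + 1 with hd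
  constructor
  · intro i j hij h1 h2 h3
    simp only [ind_eq_one_iff] at h1 h2
    have hdvd : d ∣ j - i := by
      have : (j - i) % d = 0 := by
        rw [Int.sub_emod, h1, h2]
        simp
      exact Int.dvd_of_emod_eq_zero this
    obtain ⟨c, hc⟩ := hdvd
    have hc1 : 1 ≤ c := by nlinarith [hij]
    by_cases hcc : j = i + d
    · rw [show (j - i - 1).toNat = m by omega]
      exact hm
    · exfalso
      have hc2 : 2 ≤ c := by
        rcases eq_or_lt_of_le hc1 with h | h
        · exfalso; apply hcc; rw [← h] at hc; omega
        · omega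
      have hgt : i + d < j := by nlinarith
      have hz := h3 (i + d) (by omega) hgt
      simp only [ind_eq_zero_iff] at hz
      apply hz
      rw [Int.add_emod, h1, Int.emod_self]
      simp
  · intro hfin
    exact absurd hfin hS

end INFRA4

section COMPL

noncomputable def cseq (x : ℤ → Fin 2) : ℤ → Fin 2 := fun i => bitCompl (x i)

lemma bitCompl_invol : ∀ v : Fin 2, bitCompl (bitCompl v) = v := by decide

lemma bitCompl_inj : Function.Injective bitCompl := by decide

lemma cseq_invol (x : ℤ → Fin 2) : cseq (cseq x) = x := by
  funext i
  exact bitCompl_invol _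

lemma cseq_inj : Function.Injective cseq := by
  intro a b hab
  rw [← cseq_invol a, ← cseq_invol b, hab]

lemma map_compl_compl (D : List (Fin 2)) : (D.map bitCompl).map bitCompl = D := by
  rw [List.map_map]
  have : bitCompl ∘ bitCompl = id := funext bitCompl_invol
  rw [this, List.map_id]

lemma occursAt_map {w : List (Fin 2)} {x : ℤ → Fin 2} {i : ℤ} :
    OccursAt (w.map bitCompl) (cseq x) i ↔ OccursAt w x i := by
  constructor
  · intro h ⟨j, hj⟩
    have hj' : j < (w.map bitCompl).length := by simpa using hj
    have := h ⟨j, hj'⟩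
    simp only [List.get_eq_getElem, List.getElem_map] at this
    simp only [List.get_eq_getElem]
    exact bitCompl_inj this
  · intro h ⟨j, hj⟩
    have hj' : j < w.length := by simpa using hj
    have := h ⟨j, hj'⟩
    simp only [List.get_eq_getElem] at this
    simp only [List.get_eq_getElem, List.getElem_map]
    unfold cseq
    rw [this]

lemma code_compl (W : List (Fin 2)) (x : ℤ → Fin 2) :
    unambigCode (W.map bitCompl) (cseq x) = unambigCode W x := by
  funext i
  unfold unambigCode
  by_cases h : OccursAt W x i
  · rw [if_pos ((occursAt_map).2 h), if_pos h]
  · rw [if_neg (fun hc => h ((occursAt_map).1 hc)), if_neg h]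

lemma code_compl' (D : List (Fin 2)) (z : ℤ → Fin 2) :
    unambigCode D (cseq z) = unambigCode (D.map bitCompl) z := by
  have := code_compl (D.map bitCompl) z
  rwa [map_compl_compl] at this

lemma hYS_compl {D : List (Fin 2)} {S : Set ℕ}
    (hYS : unambigCode D '' (Set.univ : Set (ℤ → Fin 2)) = GapShift S) :
    unambigCode (D.map bitCompl) '' (Set.univ : Set (ℤ → Fin 2)) = GapShift S := by
  rw [← hYS]
  ext y
  constructor
  · rintro ⟨x, -, rfl⟩
    exact ⟨cseq x, Set.mem_univ _, code_compl' D x⟩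
  · rintro ⟨x, -, rfl⟩
    exact ⟨cseq x, Set.mem_univ _, code_compl D x⟩

lemma forbid_compl {F : Set (List (Fin 2))} {x : ℤ → Fin 2} :
    x ∈ ForbidSet (complWords F) ↔ cseq x ∈ ForbidSet F := by
  constructor
  · intro h w hw i hocc
    have := h (w.map bitCompl) ⟨w, hw, rfl⟩ i
    apply this
    rw [← cseq_invol x]
    exact occursAt_map.2 hocc
  · rintro h w ⟨v, hv, rfl⟩ i hocc
    apply h v hv i
    rw [← cseq_invol x] at hocc
    exact occursAt_map.1 hocc

lemma image_on_compl (D : List (Fin 2)) (F : Set (List (Fin 2))) :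
    unambigCode D '' ForbidSet (complWords F) =
      unambigCode (D.map bitCompl) '' ForbidSet F := by
  ext y
  constructor
  · rintro ⟨x, hx, rfl⟩
    exact ⟨cseq x, forbid_compl.1 hx, code_compl D x⟩
  · rintro ⟨z, hz, rfl⟩
    refine ⟨cseq z, ?_, code_compl' D z⟩
    rw [forbid_compl, cseq_invol]
    exact hz

lemma injOn_compl (D : List (Fin 2)) (F : Set (List (Fin 2))) :
    Set.InjOn (unambigCode D) (ForbidSet (complWords F)) ↔
      Set.InjOn (unambigCode (D.map bitCompl)) (ForbidSet F) := by
  constructor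
  · intro h x1 h1 x2 h2 heq
    have hc1 : cseq x1 ∈ ForbidSet (complWords F) := by
      rw [forbid_compl, cseq_invol]; exact h1
    have hc2 : cseq x2 ∈ ForbidSet (complWords F) := by
      rw [forbid_compl, cseq_invol]; exact h2
    have : unambigCode D (cseq x1) = unambigCode D (cseq x2) := by
      rw [code_compl' D x1, code_compl' D x2]; exact heq
    exact cseq_inj (h hc1 hc2 this)
  · intro h x1 h1 x2 h2 heq
    have hc1 := forbid_compl.1 h1
    have hc2 := forbid_compl.1 h2
    have key : ∀ z, unambigCode (D.map bitCompl) (cseq z) = unambigCode D z := by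
      intro z
      rw [code_compl' (D.map bitCompl) z, map_compl_compl]
    have : unambigCode (D.map bitCompl) (cseq x1) = unambigCode (D.map bitCompl) (cseq x2) := by
      rw [key, key]; exact heq
    exact cseq_inj (h hc1 hc2 this)

lemma count_map_compl (D : List (Fin 2)) :
    (D.map bitCompl).count 1 = D.count 0 ∧ (D.map bitCompl).count 0 = D.count 1 := by
  constructor
  · have := List.count_map_of_injective D bitCompl bitCompl_inj 0
    simpa [show bitCompl 0 = 1 from by decide] using this
  · have := List.count_map_of_injective D bitCompl bitCompl_inj 1
    simpa [show bitCompl 1 = 0 from by decide] using this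

end COMPL

/-- no two ones at distance `≤ c` when all gaps are `≥ c` -/
lemma no_close_ones {S : Set ℕ} {c : ℤ} (hmin : ∀ m ∈ S, c ≤ (m : ℤ)) {w : ℤ → Fin 2}
    (hw : ∀ i j : ℤ, i < j → w i = 1 → w j = 1 →
      (∀ l : ℤ, i < l → l < j → w l = 0) → (j - i - 1).toNat ∈ S) :
    ∀ i j : ℤ, i < j → j - i ≤ c → w i = 1 → w j = 1 → False := by
  intro i j hij hd h1 h2
  obtain ⟨p, q, hp, hpq, hq, hp1, hq1, hz⟩ := consecOnes hij h1 h2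
  have := hmin _ (hw p q hpq hp1 hq1 hz)
  omega

theorem coreB (D : List (Fin 2)) (S : Set ℕ)
    (hYS : unambigCode D '' (Set.univ : Set (ℤ → Fin 2)) = GapShift S)
    (a : ℕ) (ha : a < D.length)
    (hget : ∀ q : ℤ, listFun D q = 1 ↔ q = (a : ℤ)) :
    Set.InjOn (unambigCode D) (ForbidSet (stdForbidden S)) ∧
      unambigCode D '' ForbidSet (stdForbidden S) = GapShift S := by
  set k := D.length with hkdef
  have hone : ∃ j : ℕ, ∃ hj : j < D.length, D.get ⟨j, hj⟩ = 1 := by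
    have := (hget (a : ℤ)).2 rfl
    obtain ⟨_, _, hq, hg⟩ := listFun_one_char.1 this
    exact ⟨(a : ℤ).toNat, hq, hg⟩
  have hSinf : S.Infinite := S_infinite hYS hone
  -- every gap in S is at least a and at least k - 1 - a
  have hminS : ∀ m ∈ S, (a : ℤ) ≤ m ∧ (k : ℤ) - 1 - a ≤ m := by
    intro m hm
    obtain ⟨x, hx⟩ := exists_preimage hYS (periodicPoint_mem hSinf hm)
    set d : ℤ := (m : ℤ) + 1 with hd
    have hxone : ∀ i : ℤ, i % d = 0 → OccursAt D x i := by
      intro i hi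
      rw [← code_eq_one, hx]
      exact ind_pos hi
    have h0 := occursAt_iff.1 (hxone 0 (by simp))
    have hdd := occursAt_iff.1 (hxone d (by simp [hd]))
    constructor
    · by_contra hc
      push_neg at hc
      -- d ≤ a
      have e1 := h0 (a : ℤ) (by omega) (by omega)
      have e2 := hdd (a : ℤ) (by omega) (by omega)
      rw [show (a : ℤ) - 0 = (a : ℤ) by ring] at e1
      rw [(hget _).2 rfl] at e1
      rw [e1] at e2
      have := (hget _).1 e2.symm
      omega
    · by_contra hc
      push_neg at hc
      -- d ≤ k - 1 - a
      have e1 := h0 (d + a) (by omega) (by omega)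
      have e2 := hdd (d + a) (by omega) (by omega)
      rw [show d + (a : ℤ) - d = (a : ℤ) by ring] at e2
      rw [(hget _).2 rfl] at e2
      rw [e2] at e1
      rw [show d + (a : ℤ) - 0 = d + a by ring] at e1
      have := (hget _).1 e1.symm
      omega
  -- the characterization of points of a preimage inside the SFT
  have hchar : ∀ x : ℤ → Fin 2, x ∈ ForbidSet (stdForbidden S) →
      ∀ j : ℤ, (x j = 1 ↔ OccursAt D x (j - a)) := by
    intro x hx j
    have hxgap := (mem_forbid hSinf).1 hx
    constructor
    · intro hj
      rw [occursAt_iff]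
      intro p hp1 hp2
      set q : ℤ := p - (j - a) with hq
      by_cases hqa : q = a
      · rw [(hget q).2 hqa, show p = j by omega]
        exact hj
      · rcases fin2_cases (listFun D q) with hv | hv
        · rw [hv]
          by_contra hc
          have hp1' : x p = 1 := fin2_ne_zero hc
          rcases lt_trichotomy p j with h | h | h
          · exact no_close_ones (fun m hm => (hminS m hm).1) hxgap p j h (by omega) hp1' hj
          · omega
          · exact no_close_ones (fun m hm => (hminS m hm).2) hxgap j p h (by omega) hj hp1'
        · have := (hget q).1 hv
          omega
    · intro hocc
      have := occursAt_iff.1 hocc j (by omega) (by omega)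
      rwa [show j - (j - (a : ℤ)) = (a : ℤ) by ring, (hget _).2 rfl] at this
  constructor
  · -- injectivity
    intro x hx x' hx' heq
    funext j
    have h1 : x j = 1 ↔ unambigCode D x (j - a) = 1 := by
      rw [code_eq_one]; exact hchar x hx j
    have h2 : x' j = 1 ↔ unambigCode D x' (j - a) = 1 := by
      rw [code_eq_one]; exact hchar x' hx' j
    rw [heq] at h1
    rcases fin2_cases (x j) with hv | hv <;> rcases fin2_cases (x' j) with hv' | hv'
    · rw [hv, hv']
    · exfalso
      rw [hv] at h1
      have := h1.2 (h2.1 hv')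
      exact fin2_one_ne_zero this.symm
    · exfalso
      rw [hv'] at h2
      have := h2.2 (h1.1 hv)
      exact fin2_one_ne_zero this.symm
    · rw [hv, hv']
  · -- surjectivity onto the gap shift
    apply Set.Subset.antisymm
    · rw [← hYS]
      exact Set.image_mono (Set.subset_univ _)
    · intro y hy
      set x : ℤ → Fin 2 := fun j => y (j - a) with hxdef
      have hxFS : x ∈ ForbidSet (stdForbidden S) := by
        rw [mem_forbid hSinf]
        intro i j hij h1 h2 h3
        have := hy.1 (i - a) (j - a) (by omega) h1 h2 (by
          intro l hl1 hl2
          have := h3 (l + a) (by omega) (by omega)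
          have e : x (l + a) = y l := by
            simp only [hxdef]
            congr 1
            ring
          rwa [e] at this)
        rwa [show (j - a) - (i - a) - 1 = j - i - 1 by ring] at this
      refine ⟨x, hxFS, ?_⟩
      funext i
      have hiff : OccursAt D x i ↔ y i = 1 := by
        constructor
        · intro hocc
          have := occursAt_iff.1 hocc (i + a) (by omega) (by omega)
          rw [show i + (a : ℤ) - i = (a : ℤ) by ring, (hget _).2 rfl] at this
          simpa [hxdef] using this
        · intro hyi
          rw [occursAt_iff]
          intro p hp1 hp2
          set q : ℤ := p - i with hq
          by_cases hqa : q = a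
          · rw [(hget q).2 hqa]
            have : p - (a : ℤ) = i := by omega
            simp only [hxdef]
            rw [this]
            exact hyi
          · rcases fin2_cases (listFun D q) with hv | hv
            · rw [hv]
              simp only [hxdef]
              by_contra hc
              have hp1' : y (p - a) = 1 := fin2_ne_zero hc
              rcases lt_trichotomy (p - (a:ℤ)) i with h | h | h
              · exact no_close_ones (fun m hm => (hminS m hm).1) hy.1 (p - a) i h
                  (by omega) hp1' hyi
              · omega
              · exact no_close_ones (fun m hm => (hminS m hm).2) hy.1 i (p - a) h
                  (by omega) hyi hp1'
            · have := (hget q).1 hv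
              omega
      rcases fin2_cases (y i) with hv | hv
      · rw [hv, code_eq_zero]
        intro hc
        have h1 := hiff.1 hc
        rw [hv] at h1
        exact fin2_one_ne_zero h1.symm
      · rw [hv, code_eq_one]
        exact hiff.2 hv

/-- greatest one before `t`, given a one at `L < t` -/
lemma prevOne_aux (x : ℤ → Fin 2) :
    ∀ n : ℕ, ∀ L t : ℤ, (t - L).toNat ≤ n → L < t → x L = 1 →
      ∃ p : ℤ, L ≤ p ∧ p < t ∧ x p = 1 ∧ ∀ l : ℤ, p < l → l < t → x l = 0 := by
  intro n
  induction n with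
  | zero => intro L t h1 h2 _; omega
  | succ n ih =>
    intro L t h1 h2 hL
    by_cases hz : ∀ l : ℤ, L < l → l < t → x l = 0
    · exact ⟨L, le_refl _, h2, hL, hz⟩
    · push_neg at hz
      obtain ⟨l, hl1, hl2, hl3⟩ := hz
      obtain ⟨p, hp1, hp2, hp3, hp4⟩ := ih l t (by omega) hl2 (fin2_ne_zero hl3)
      exact ⟨p, by omega, hp2, hp3, hp4⟩

lemma prevOne {x : ℤ → Fin 2} {L t : ℤ} (h2 : L < t) (hL : x L = 1) :
    ∃ p : ℤ, L ≤ p ∧ p < t ∧ x p = 1 ∧ ∀ l : ℤ, p < l → l < t → x l = 0 :=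
  prevOne_aux x (t - L).toNat L t (le_refl _) h2 hL

theorem coreA (D : List (Fin 2)) (hk : 0 < D.length) (S : Set ℕ)
    (hYS : unambigCode D '' (Set.univ : Set (ℤ → Fin 2)) = GapShift S)
    (hzero : ∀ q : ℤ, listFun D q = 0) :
    Set.InjOn (unambigCode D) (ForbidSet (stdForbidden S)) ∧
      unambigCode D '' ForbidSet (stdForbidden S) = GapShift S := by
  set k := D.length with hkdef
  -- occurrence = all-zero window
  have hoz : ∀ (x : ℤ → Fin 2) (i : ℤ),
      OccursAt D x i ↔ ∀ p : ℤ, i ≤ p → p < i + k → x p = 0 := by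
    intro x i
    rw [occursAt_iff]
    constructor
    · intro h p h1 h2
      rw [h p h1 h2, hzero]
    · intro h p h1 h2
      rw [h p h1 h2, hzero]
  -- fact (i) : [k, ∞) ⊆ S
  have hki : ∀ L : ℕ, k ≤ L → L ∈ S := by
    intro L hL
    set x : ℤ → Fin 2 := fun p =>
      ind (¬ ((0 ≤ p ∧ p < (k : ℤ)) ∨ ((L : ℤ) + 1 ≤ p ∧ p < (L : ℤ) + 1 + k))) with hx
    have hxzero : ∀ p : ℤ,
        ((0 ≤ p ∧ p < (k : ℤ)) ∨ ((L : ℤ) + 1 ≤ p ∧ p < (L : ℤ) + 1 + k)) → x p = 0 := by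
      intro p hp
      rw [hx]
      exact ind_neg (not_not_intro hp)
    have hxone : ∀ p : ℤ,
        ¬ ((0 ≤ p ∧ p < (k : ℤ)) ∨ ((L : ℤ) + 1 ≤ p ∧ p < (L : ℤ) + 1 + k)) → x p = 1 := by
      intro p hp
      rw [hx]
      exact ind_pos hp
    have hocc0 : OccursAt D x 0 := by
      rw [hoz]
      intro p h1 h2
      exact hxzero p (Or.inl ⟨h1, by omega⟩)
    have hoccL : OccursAt D x ((L : ℤ) + 1) := by
      rw [hoz]
      intro p h1 h2
      exact hxzero p (Or.inr ⟨h1, by omega⟩)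
    have hno : ∀ i : ℤ, 0 < i → i < (L : ℤ) + 1 → ¬ OccursAt D x i := by
      intro i h1 h2 hocc
      rw [hoz] at hocc
      by_cases hik : i ≤ (k : ℤ)
      · have := hocc (k : ℤ) (by omega) (by omega)
        rw [hxone (k : ℤ) (by push_neg; omega)] at this
        exact fin2_one_ne_zero this
      · have := hocc i (le_refl _) (by omega)
        rw [hxone i (by push_neg; omega)] at this
        exact fin2_one_ne_zero this
    have hy := phi_mem hYS x
    have := hy.1 0 ((L : ℤ) + 1) (by omega) (code_eq_one.2 hocc0) (code_eq_one.2 hoccL)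
      (fun l hl1 hl2 => code_eq_zero.2 (hno l hl1 hl2))
    rwa [show ((L : ℤ) + 1 - 0 - 1).toNat = L by omega] at this
  have hSinf : S.Infinite :=
    Set.infinite_of_injective_forall_mem
      (f := fun n : ℕ => k + n)
      (fun a b hab => by simpa using hab)
      (fun a => hki _ (Nat.le_add_right _ _))
  -- fact (ii) : no gaps in [1, k-1]
  have hsmall : ∀ m ∈ S, m = 0 ∨ k ≤ m := by
    intro m hm
    by_contra hc
    push_neg at hc
    obtain ⟨hm1, hm2⟩ := hc
    obtain ⟨x, hx⟩ := exists_preimage hYS (periodicPoint_mem hSinf hm)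
    set d : ℤ := (m : ℤ) + 1 with hd
    have hxone : ∀ i : ℤ, i % d = 0 → OccursAt D x i := by
      intro i hi
      rw [← code_eq_one, hx]
      exact ind_pos hi
    have h0 := (hoz x 0).1 (hxone 0 (by simp))
    have hdd := (hoz x d).1 (hxone d (by simp [hd]))
    have hocc1 : OccursAt D x 1 := by
      rw [hoz]
      intro p h1 h2
      by_cases hp : p < (k : ℤ)
      · exact h0 p (by omega) (by omega)
      · exact hdd p (by omega) (by omega)
    have : (1 : ℤ) % d = 0 := by
      have := code_eq_one.2 hocc1
      rw [hx] at this
      exact ind_eq_one_iff.1 this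
    rcases Int.emod_emod_of_dvd 1 (dvd_refl d) with _
    have hd2 : 2 ≤ d := by omega
    rw [Int.emod_eq_of_lt (by omega) (by omega)] at this
    exact one_ne_zero this
  -- determination of points in the SFT by their image
  have hdet : ∀ x : ℤ → Fin 2, x ∈ ForbidSet (stdForbidden S) → ∀ j : ℤ,
      (x j = 0 ↔ ∃ i : ℤ, j - k + 1 ≤ i ∧ i ≤ j ∧ OccursAt D x i) := by
    intro x hx j
    have hxgap := (mem_forbid hSinf).1 hx
    constructor
    · intro hj
      by_cases hR : ∀ l : ℤ, j < l → l < j + k → x l = 0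
      · refine ⟨j, by omega, le_refl _, ?_⟩
        rw [hoz]
        intro p h1 h2
        rcases eq_or_lt_of_le h1 with rfl | h
        · exact hj
        · exact hR p h h2
      · push_neg at hR
        obtain ⟨l, hl1, hl2, hl3⟩ := hR
        obtain ⟨q, hq1, hq2, hq3, hq4⟩ := nextOne hl1 (fin2_ne_zero hl3)
        by_cases hL : ∀ l' : ℤ, q - k ≤ l' → l' < j → x l' = 0
        · refine ⟨q - k, by omega, by omega, ?_⟩
          rw [hoz]
          intro p h1 h2
          rcases lt_trichotomy p j with h | rfl | h
          · exact hL p (by omega) h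
          · exact hj
          · exact hq4 p h (by omega)
        · exfalso
          push_neg at hL
          obtain ⟨l0, hl01, hl02, hl03⟩ := hL
          obtain ⟨p, hp1, hp2, hp3, hp4⟩ := prevOne hl02 (fin2_ne_zero hl03)
          have hz : ∀ w : ℤ, p < w → w < q → x w = 0 := by
            intro w hw1 hw2
            rcases lt_trichotomy w j with h | rfl | h
            · exact hp4 w hw1 h
            · exact hj
            · exact hq4 w h hw2
          have hmem := hxgap p q (by omega) hp3 hq3 hz
          rcases hsmall _ hmem with h | h
          · omega
          · omega
    · rintro ⟨i, h1, h2, hocc⟩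
      exact (hoz x i).1 hocc j h2 (by omega)
  constructor
  · -- injectivity
    intro x hx x' hx' heq
    funext j
    have h1 := hdet x hx j
    have h2 := hdet x' hx' j
    have hiff : x j = 0 ↔ x' j = 0 := by
      rw [h1, h2]
      constructor
      · rintro ⟨i, hi1, hi2, hi3⟩
        refine ⟨i, hi1, hi2, code_eq_one.1 ?_⟩
        rw [← heq]
        exact code_eq_one.2 hi3
      · rintro ⟨i, hi1, hi2, hi3⟩
        refine ⟨i, hi1, hi2, code_eq_one.1 ?_⟩
        rw [heq]
        exact code_eq_one.2 hi3
    rcases fin2_cases (x j) with hv | hv <;> rcases fin2_cases (x' j) with hv' | hv'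
    · rw [hv, hv']
    · exfalso
      rw [hv'] at hiff
      have := hiff.1 hv
      exact fin2_one_ne_zero this
    · exfalso
      rw [hv] at hiff
      have := hiff.2 hv'
      exact fin2_one_ne_zero this
    · rw [hv, hv']
  · -- surjectivity
    apply Set.Subset.antisymm
    · rw [← hYS]
      exact Set.image_mono (Set.subset_univ _)
    · intro y hy
      set x : ℤ → Fin 2 := fun j =>
        ind (¬ ∃ i : ℤ, j - k + 1 ≤ i ∧ i ≤ j ∧ y i = 1) with hxd
      have hx0 : ∀ j : ℤ, x j = 0 ↔ ∃ i : ℤ, j - k + 1 ≤ i ∧ i ≤ j ∧ y i = 1 := by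
        intro j
        rw [hxd]
        rw [ind_eq_zero_iff, not_not]
      have hx1 : ∀ j : ℤ, x j = 1 ↔ ¬ ∃ i : ℤ, j - k + 1 ≤ i ∧ i ≤ j ∧ y i = 1 := by
        intro j
        rw [hxd, ind_eq_one_iff]
      have hocc_iff : ∀ i : ℤ, OccursAt D x i ↔ y i = 1 := by
        intro i
        constructor
        · intro hocc
          rcases fin2_cases (y i) with hv | hv
          · exfalso
            rw [hoz] at hocc
            have hxi := (hx0 i).1 (hocc i (le_refl _) (by omega))
            obtain ⟨p0, hp01, hp02, hp03⟩ := hxi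
            have hp0i : p0 < i := by
              rcases eq_or_lt_of_le hp02 with rfl | h
              · exfalso; rw [hv] at hp03; exact fin2_one_ne_zero hp03.symm
              · exact h
            obtain ⟨p, hp1, hp2, hp3, hp4⟩ := prevOne hp0i hp03
            have hxik := (hx0 (i + k - 1)).1 (hocc (i + k - 1) (by omega) (by omega))
            obtain ⟨q0, hq01, hq02, hq03⟩ := hxik
            have hq0i : i < q0 := by
              rcases eq_or_lt_of_le (show i ≤ q0 by omega) with rfl | h
              · exfalso; rw [hv] at hq03; exact fin2_one_ne_zero hq03.symm
              · exact h
            obtain ⟨q, hq1, hq2, hq3, hq4⟩ := nextOne hq0i hq03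
            have hbetween : ∀ l : ℤ, p < l → l < q → y l = 0 := by
              intro l h1 h2
              rcases lt_trichotomy l i with h | rfl | h
              · exact hp4 l h1 h
              · exact hv
              · exact hq4 l h h2
            have hgap := hy.1 p q (by omega) hp3 hq3 hbetween
            have hgapk : (k : ℤ) + 1 ≤ q - p := by
              rcases hsmall _ hgap with h | h
              · omega
              · omega
            -- the position p + k lies in the window and is covered by no one
            have hu := (hx0 (p + k)).1 (hocc (p + k) (by omega) (by omega))
            obtain ⟨v, hv1, hv2, hv3⟩ := hu
            have : y v = 0 := hbetween v (by omega) (by omega)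
            rw [this] at hv3
            exact fin2_one_ne_zero hv3.symm
          · exact hv
        · intro hyi
          rw [hoz]
          intro p h1 h2
          rw [hx0]
          exact ⟨i, by omega, by omega, hyi⟩
      have hzeroS : 0 ∈ S := by
        set x'' : ℤ → Fin 2 := fun p => ind (¬ (0 ≤ p ∧ p < (k : ℤ) + 1)) with hx''
        have hz'' : ∀ p : ℤ, 0 ≤ p → p < (k : ℤ) + 1 → x'' p = 0 := by
          intro p h1 h2
          rw [hx'']
          exact ind_neg (not_not_intro ⟨h1, h2⟩)
        have hocc0 : OccursAt D x'' 0 := by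
          rw [hoz]; intro p h1 h2; exact hz'' p h1 (by omega)
        have hocc1 : OccursAt D x'' 1 := by
          rw [hoz]; intro p h1 h2; exact hz'' p (by omega) (by omega)
        have hy'' := phi_mem hYS x''
        have := hy''.1 0 1 (by omega) (code_eq_one.2 hocc0) (code_eq_one.2 hocc1)
          (fun l hl1 hl2 => absurd hl1 (by omega))
        simpa using this
      have hxFS : x ∈ ForbidSet (stdForbidden S) := by
        rw [mem_forbid hSinf]
        intro i' j' hij h1 h2 h3
        have hno_i := (hx1 i').1 h1
        have hno_j := (hx1 j').1 h2
        by_cases hm0 : j' = i' + 1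
        · rw [hm0, show (i' + 1 - i' - 1).toNat = 0 by omega]
          exact hzeroS
        · have hxl := h3 (i' + 1) (by omega) (by omega)
          have : ∃ i : ℤ, i' + 1 - k + 1 ≤ i ∧ i ≤ i' + 1 ∧ y i = 1 := (hx0 _).1 hxl
          obtain ⟨v, hv1, hv2, hv3⟩ := this
          have hvi : v = i' + 1 := by
            by_contra hc
            exact hno_i ⟨v, by omega, by omega, hv3⟩
          have hjk : (k : ℤ) < j' - i' := by
            by_contra hc
            push_neg at hc
            exact hno_j ⟨v, by omega, by omega, hv3⟩
          have : (j' - i' - 1).toNat ∈ S := hki _ (by omega)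
          exact this
      refine ⟨x, hxFS, ?_⟩
      funext i
      rcases fin2_cases (y i) with hv | hv
      · rw [hv, code_eq_zero]
        intro hc
        have h1 := (hocc_iff i).1 hc
        rw [hv] at h1
        exact fin2_one_ne_zero h1.symm
      · rw [hv, code_eq_one]
        exact (hocc_iff i).2 hv

section MODHELP

variable {d : ℤ}

lemma mod_add_self (hd : 0 < d) (a : ℤ) : (a + d) % d = a % d := by
  rw [show a + d = a + d * 1 by ring, Int.add_mul_emod_self_left]

lemma mod_nonneg' (hd : 0 < d) (a : ℤ) : 0 ≤ a % d := Int.emod_nonneg a (by omega)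

lemma mod_lt' (hd : 0 < d) (a : ℤ) : a % d < d := Int.emod_lt_of_pos a hd

lemma mod_small (hd : 0 < d) {a : ℤ} (h1 : 0 ≤ a) (h2 : a < d) : a % d = a :=
  Int.emod_eq_of_lt h1 h2

lemma mod_mod (hd : 0 < d) (a : ℤ) : a % d % d = a % d :=
  Int.emod_emod_of_dvd a (dvd_refl d)

lemma same_res_step (hd : 0 < d) {a b : ℤ} (hab : a < b) (h : a % d = b % d) :
    a + d ≤ b := by
  have hdvd : d ∣ b - a := by
    have : (b - a) % d = 0 := by
      rw [Int.sub_emod, h]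
      simp
    exact Int.dvd_of_emod_eq_zero this
  obtain ⟨c, hc⟩ := hdvd
  have : 1 ≤ c := by nlinarith
  nlinarith

lemma sub_mod_self (hd : 0 < d) (a : ℤ) : (a - a % d) % d = 0 := by
  rw [Int.sub_emod, mod_mod hd]
  simp

lemma mod_le_self (hd : 0 < d) {a : ℤ} (ha : 0 ≤ a) : a % d ≤ a := by
  conv_rhs => rw [← Int.mul_ediv_add_emod a d]
  have h1 : 0 ≤ a / d := Int.ediv_nonneg ha (by omega)
  nlinarith

end MODHELP

section COUNT

lemma count_two_nat : ∀ (D : List (Fin 2)) (v : Fin 2), 2 ≤ D.count v →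
    ∃ (j1 j2 : ℕ) (h1 : j1 < D.length) (h2 : j2 < D.length),
      j1 < j2 ∧ D.get ⟨j1, h1⟩ = v ∧ D.get ⟨j2, h2⟩ = v := by
  intro D
  induction D with
  | nil => intro v h; simp at h
  | cons w t ih =>
    intro v h
    by_cases hw : w = v
    · subst hw
      rw [List.count_cons_self] at h
      have hv : w ∈ t := List.count_pos_iff.1 (by omega)
      obtain ⟨⟨j, hj⟩, hget⟩ := List.mem_iff_get.1 hv
      refine ⟨0, j + 1, ?_, ?_, ?_, ?_, ?_⟩
      · simp
      · simpa using Nat.succ_lt_succ hj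
      · omega
      · rfl
      · simpa using hget
    · rw [List.count_cons_of_ne hw] at h
      obtain ⟨j1, j2, h1, h2, hlt, hg1, hg2⟩ := ih v h
      refine ⟨j1 + 1, j2 + 1, ?_, ?_, ?_, ?_, ?_⟩
      · simpa using Nat.succ_lt_succ h1
      · simpa using Nat.succ_lt_succ h2
      · omega
      · simpa using hg1
      · simpa using hg2

lemma count_two_int (D : List (Fin 2)) (v : Fin 2) (h : 2 ≤ D.count v) :
    ∃ q1 q2 : ℤ, 0 ≤ q1 ∧ q1 < q2 ∧ q2 < (D.length : ℤ) ∧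
      listFun D q1 = v ∧ listFun D q2 = v := by
  obtain ⟨j1, j2, h1, h2, hlt, hg1, hg2⟩ := count_two_nat D v h
  refine ⟨(j1 : ℤ), (j2 : ℤ), by omega, by omega, by omega, ?_, ?_⟩
  · rw [listFun_of (by omega) (by omega) (by simpa using h1)]
    simpa using hg1
  · rw [listFun_of (by omega) (by omega) (by simpa using h2)]
    simpa using hg2

lemma count_one_zero (D : List (Fin 2)) (h : D.count 1 = 0) : ∀ q : ℤ, listFun D q = 0 := by
  intro q
  by_cases h1 : 0 ≤ q
  · by_cases hlen : q < (D.length : ℤ)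
    · have hq' : q.toNat < D.length := by omega
      rw [listFun_of h1 hlen hq']
      have hmem := D.get_mem ⟨q.toNat, hq'⟩
      have hne : D.get ⟨q.toNat, hq'⟩ ≠ 1 := by
        intro hc
        rw [← hc] at h
        have := List.count_pos_iff.2 hmem
        omega
      exact fin2_ne_one hne
    · exact listFun_ge (by omega)
  · exact listFun_neg (by omega)

lemma count_one_structure : ∀ (D : List (Fin 2)), D.count 1 = 1 →
    ∃ a b : ℕ, D = List.replicate a 0 ++ [1] ++ List.replicate b 0 := by
  intro D
  induction D with
  | nil => intro h; simp at h
  | cons w t ih =>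
    intro h
    by_cases hw : w = 1
    · subst hw
      rw [List.count_cons_self] at h
      have ht : t.count 1 = 0 := by omega
      have hrep : t = List.replicate t.length 0 := by
        rw [List.eq_replicate_iff]
        refine ⟨rfl, ?_⟩
        intro v hv
        have hne : v ≠ 1 := by
          intro hc
          rw [hc] at hv
          have := List.count_pos_iff.2 hv
          omega
        exact fin2_ne_one hne
      refine ⟨0, t.length, ?_⟩
      conv_lhs => rw [hrep]
      simp
    · have hw0 : w = 0 := fin2_ne_one hw
      rw [List.count_cons_of_ne hw] at h
      obtain ⟨a, b, hab⟩ := ih h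
      refine ⟨a + 1, b, ?_⟩
      rw [hw0, hab]
      simp [List.replicate_succ]

lemma single_one_get_nat (a b j : ℕ)
    (hj : j < (List.replicate a (0 : Fin 2) ++ [1] ++ List.replicate b 0).length) :
    (List.replicate a (0 : Fin 2) ++ [1] ++ List.replicate b 0).get ⟨j, hj⟩
      = if j = a then 1 else 0 := by
  have hlen : (List.replicate a (0 : Fin 2) ++ [1] ++ List.replicate b 0).length = a + 1 + b := by
    simp +arith
  have hj' : j < a + 1 + b := hlen ▸ hj
  rw [List.get_eq_getElem]
  rcases lt_trichotomy j a with hlt | heq | hgt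
  · rw [List.getElem_append_left (by simp; omega)]
    rw [List.getElem_append_left (by simp; omega)]
    rw [List.getElem_replicate]
    rw [if_neg (by omega)]
  · subst heq
    rw [List.getElem_append_left (by simp +arith)]
    rw [List.getElem_append_right (by simp)]
    rw [if_pos rfl]
    simp
  · rw [List.getElem_append_right (by simp; omega)]
    rw [List.getElem_replicate]
    rw [if_neg (by omega)]

lemma single_one_get (a b : ℕ) :
    ∀ q : ℤ, listFun (List.replicate a 0 ++ [1] ++ List.replicate b 0) q = 1 ↔ q = (a : ℤ) := by
  intro q
  have hlen : (List.replicate a (0 : Fin 2) ++ [1] ++ List.replicate b 0).length = a + 1 + b := by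
    simp +arith
  constructor
  · intro h
    obtain ⟨h1, h2, hq, hget⟩ := listFun_one_char.1 h
    rw [single_one_get_nat a b q.toNat hq] at hget
    by_cases hc : q.toNat = a
    · omega
    · rw [if_neg hc] at hget
      exact absurd hget.symm fin2_one_ne_zero
  · intro h
    subst h
    have hq : (a : ℤ).toNat < (List.replicate a (0 : Fin 2) ++ [1] ++ List.replicate b 0).length := by
      rw [hlen]; omega
    rw [listFun_of (by omega) (by rw [hlen]; omega) hq]
    rw [single_one_get_nat a b _ hq]
    rw [if_pos (by omega)]

end COUNT

theorem notOnto (D : List (Fin 2)) (S : Set ℕ)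
    (hYS : unambigCode D '' (Set.univ : Set (ℤ → Fin 2)) = GapShift S)
    (hc1 : 2 ≤ D.count 1) (hc0 : 2 ≤ D.count 0) :
    unambigCode D '' ForbidSet (stdForbidden S) ≠ GapShift S := by
  intro heq
  obtain ⟨u1, u2, hu10, hu12, hu2k, hu1v, hu2v⟩ := count_two_int D 1 hc1
  obtain ⟨z1, z2, hz10, hz12, hz2k, hz1v, hz2v⟩ := count_two_int D 0 hc0
  have hk : 0 < D.length := by omega
  have hone : ∃ j : ℕ, ∃ hj : j < D.length, D.get ⟨j, hj⟩ = 1 := by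
    obtain ⟨h1, h2, hq, hget⟩ := listFun_one_char.1 hu1v
    exact ⟨u1.toNat, hq, hget⟩
  have hSinf : S.Infinite := S_infinite hYS hone
  have hSne : S.Nonempty := hSinf.nonempty
  have hm₀S : sInf S ∈ S := Nat.sInf_mem hSne
  have hminS : ∀ m ∈ S, sInf S ≤ m := fun m hm => Nat.sInf_le hm
  obtain ⟨d, hddef⟩ : ∃ d : ℤ, d = ((sInf S : ℕ) : ℤ) + 1 := ⟨_, rfl⟩
  have hd0 : 0 < d := by omega
  -- d ≤ k
  have hdk : d ≤ (D.length : ℤ) := by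
    have hkz : (0 : ℤ) < (D.length : ℤ) := by omega
    obtain ⟨x₁, hx₁⟩ : ∃ x₁ : ℤ → Fin 2, x₁ = fun i => listFun D (i % (D.length : ℤ)) :=
      ⟨_, rfl⟩
    have hocc : ∀ i : ℤ, i % (D.length : ℤ) = 0 → OccursAt D x₁ i := by
      intro i hi
      rw [occursAt_iff]
      intro p hp1 hp2
      have e : p % (D.length : ℤ) = p - i := by
        have h1 : (p - i) % (D.length : ℤ) = p - i := mod_small hkz (by omega) (by omega)
        rw [Int.sub_emod, hi, sub_zero, mod_mod hkz] at h1
        exact h1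
      rw [hx₁]
      simp only []
      rw [e]
    have hy₁ := phi_mem hYS x₁
    have h01 : unambigCode D x₁ 0 = 1 := code_eq_one.2 (hocc 0 (by simp))
    have hk1 : unambigCode D x₁ (D.length : ℤ) = 1 := code_eq_one.2 (hocc _ (by simp))
    obtain ⟨q, hq1, hq2, hq3, hq4⟩ := nextOne hkz hk1
    have hmem := hy₁.1 0 q hq1 h01 hq3 hq4
    have := hminS _ hmem
    omega
  -- preimage of the periodic point
  obtain ⟨x₀, hx₀⟩ := exists_preimage hYS (periodicPoint_mem hSinf hm₀S)
  have hocc₀ : ∀ i : ℤ, i % d = 0 → OccursAt D x₀ i := by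
    intro i hi
    rw [← code_eq_one, congrFun hx₀ i]
    apply ind_pos
    rw [← hddef]
    exact hi
  have hfor₀ := fun i (hi : i % d = 0) => occursAt_iff.1 (hocc₀ i hi)
  -- periodicity of D with period d
  have hper : ∀ q : ℤ, 0 ≤ q → q + d < (D.length : ℤ) → listFun D (q + d) = listFun D q := by
    intro q hq1 hq2
    have e1 := hfor₀ 0 (by simp) (q + d) (by omega) (by omega)
    have e2 := hfor₀ d (by simp) (d + q) (by omega) (by omega)
    rw [show d + q = q + d by ring] at e2
    rw [show q + d - 0 = q + d by ring] at e1
    rw [show q + d - d = q by ring] at e2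
    rw [← e1, e2]
  have hper' : ∀ q : ℤ, 0 ≤ q → q < (D.length : ℤ) → listFun D q = listFun D (q % d) := by
    have aux : ∀ n : ℕ, ∀ q : ℤ, q.toNat ≤ n → 0 ≤ q → q < (D.length : ℤ) →
        listFun D q = listFun D (q % d) := by
      intro n
      induction n with
      | zero =>
        intro q h1 h2 h3
        have hq0 : q = 0 := by omega
        subst hq0
        rw [show (0 : ℤ) % d = 0 from Int.zero_emod d]
      | succ n ih =>
        intro q h1 h2 h3
        by_cases hqd : q < d
        · rw [mod_small hd0 h2 hqd]
        · push_neg at hqd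
          have e := hper (q - d) (by omega) (by omega)
          rw [show q - d + d = q by ring] at e
          rw [e]
          have e2 := ih (q - d) (by omega) (by omega) (by omega)
          rw [e2]
          congr 1
          rw [← mod_add_self hd0 (q - d), show q - d + d = q by ring]
    exact fun q => aux q.toNat q (le_refl _)
  -- the forced form of any preimage of the periodic point
  have hx₀form : ∀ i : ℤ, x₀ i = listFun D (i % d) := by
    intro i
    have h := hfor₀ (i - i % d) (sub_mod_self hd0 i) i
      (by have := mod_nonneg' hd0 i; omega) (by have := mod_lt' hd0 i; omega)
    rw [show i - (i - i % d) = i % d by ring] at h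
    exact h
  by_cases hcase : ∃ t1 t2 : ℤ, 0 ≤ t1 ∧ t1 < t2 ∧ t2 < d ∧
      listFun D t1 = 1 ∧ listFun D t2 = 1
  · -- Case A : two ones within a period
    obtain ⟨t1, t2, ht10, ht12, ht2d, hv1, hv2⟩ := hcase
    have hmem : (fun i : ℤ => ind (i % (((sInf S : ℕ) : ℤ) + 1) = 0)) ∈
        unambigCode D '' ForbidSet (stdForbidden S) := by
      rw [heq]
      exact periodicPoint_mem hSinf hm₀S
    obtain ⟨x, hxFS, hphi⟩ := hmem
    have hoccx : ∀ i : ℤ, i % d = 0 → OccursAt D x i := by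
      intro i hi
      rw [← code_eq_one, congrFun hphi i]
      apply ind_pos
      rw [← hddef]
      exact hi
    have hxform : ∀ i : ℤ, x i = listFun D (i % d) := by
      intro i
      have h := occursAt_iff.1 (hoccx (i - i % d) (sub_mod_self hd0 i)) i
        (by have := mod_nonneg' hd0 i; omega) (by have := mod_lt' hd0 i; omega)
      rw [show i - (i - i % d) = i % d by ring] at h
      exact h
    have hx1 : x t1 = 1 := by rw [hxform, mod_small hd0 ht10 (by omega)]; exact hv1
    have hx2 : x t2 = 1 := by rw [hxform, mod_small hd0 (by omega) ht2d]; exact hv2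
    exact no_close_ones (c := ((sInf S : ℕ) : ℤ))
      (fun m hm => by exact_mod_cast hminS m hm)
      ((mem_forbid hSinf).1 hxFS) t1 t2 ht12 (by omega) hx1 hx2
  · -- Case B : a single one within the period
    push_neg at hcase
    have honec : listFun D (u1 % d) = 1 := by
      rw [← hper' u1 hu10 (by omega)]
      exact hu1v
    obtain ⟨c, hcdef⟩ : ∃ c : ℤ, c = u1 % d := ⟨_, rfl⟩
    rw [← hcdef] at honec
    have hc0 : 0 ≤ c := by rw [hcdef]; exact mod_nonneg' hd0 _
    have hcd : c < d := by rw [hcdef]; exact mod_lt' hd0 _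
    have huniq : ∀ q : ℤ, listFun D q = 1 → q % d = c := by
      intro q hq
      obtain ⟨hq0, hqk, _, _⟩ := listFun_one_char.1 hq
      have h1 : listFun D (q % d) = 1 := by rw [← hper' q hq0 hqk]; exact hq
      rcases lt_trichotomy (q % d) c with h | h | h
      · exact absurd honec (hcase (q % d) c (mod_nonneg' hd0 q) h hcd h1)
      · exact h
      · exact absurd h1 (hcase c (q % d) hc0 h (mod_lt' hd0 q) honec)
    have hd2 : 2 ≤ d := by
      by_contra hcon
      have hd1 : d = 1 := by omega
      have hz' := hper' z1 hz10 (by omega)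
      rw [hd1, Int.emod_one] at hz'
      have hc00 : c = 0 := by omega
      rw [← hc00] at hz'
      rw [hz'] at hz1v
      rw [honec] at hz1v
      exact fin2_one_ne_zero hz1v
    have hcdk : c + d < (D.length : ℤ) := by
      have e1 := huniq u1 hu1v
      have e2 := huniq u2 hu2v
      have hstep := same_res_step hd0 hu12 (by rw [e1, e2])
      have hle : c ≤ u1 := by rw [← e1]; exact mod_le_self hd0 hu10
      omega
    -- the second smallest element of S
    have hSm : (S \ {sInf S}).Nonempty := (hSinf.diff (Set.finite_singleton _)).nonempty
    have hgmem : sInf (S \ {sInf S}) ∈ S \ {sInf S} := Nat.sInf_mem hSm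
    obtain ⟨g, hgdef⟩ : ∃ g : ℕ, g = sInf (S \ {sInf S}) := ⟨_, rfl⟩
    rw [← hgdef] at hgmem
    have hgS : g ∈ S := hgmem.1
    have hgm₀ : sInf S < g := by
      rcases lt_or_eq_of_le (hminS _ hgS) with h | h
      · exact h
      · exact absurd h.symm hgmem.2
    have hsecond : ∀ m ∈ S, m = sInf S ∨ g ≤ m := by
      intro m hm
      by_cases h : m = sInf S
      · exact Or.inl h
      · exact Or.inr (by rw [hgdef]; exact Nat.sInf_le ⟨hm, h⟩)
    have hdG : d ≤ (g : ℤ) := by omega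
    -- the obstruction point y₂
    obtain ⟨y₂, hy₂def⟩ : ∃ y₂ : ℤ → Fin 2, y₂ = fun i =>
        ind ((i ≤ 0 ∧ i % d = 0) ∨ ((g : ℤ) + 1 ≤ i ∧ (i - ((g : ℤ) + 1)) % d = 0)) :=
      ⟨_, rfl⟩
    have hy₂one : ∀ t : ℤ, ((t ≤ 0 ∧ t % d = 0) ∨ ((g : ℤ) + 1 ≤ t ∧ (t - ((g : ℤ) + 1)) % d = 0))
        → y₂ t = 1 := by
      intro t ht
      rw [hy₂def]
      exact ind_pos ht
    have hy₂mem : y₂ ∈ GapShift S := by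
      constructor
      · intro i j hij hyi hyj hz
        rw [hy₂def] at hyi hyj
        have hi := ind_eq_one_iff.1 hyi
        have hj := ind_eq_one_iff.1 hyj
        have hnext : ∀ w : ℤ, y₂ w = 1 → i < w → j ≤ w := by
          intro w hw hiw
          by_contra hcon
          push_neg at hcon
          have := hz w hiw hcon
          rw [this] at hw
          exact fin2_one_ne_zero hw.symm
        rcases hi with ⟨hi0, hid⟩ | ⟨hiG, hid⟩
        · by_cases hi' : i + d ≤ 0
          · have hj' : j ≤ i + d := hnext (i + d)
              (hy₂one _ (Or.inl ⟨hi', by rw [mod_add_self hd0, hid]⟩)) (by omega)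
            rcases hj with ⟨hj0, hjd⟩ | ⟨hjG, hjd⟩
            · have hge : i + d ≤ j := same_res_step hd0 hij (by rw [hid, hjd])
              have hjeq : j = i + d := by omega
              rw [hjeq, show (i + d - i - 1).toNat = sInf S by omega]
              exact hm₀S
            · omega
          · have hi00 : i = 0 := by
              by_contra hcon
              have hi0' : -d < i ∧ i < 0 := by omega
              have he : i % d = i + d := by
                rw [← mod_add_self hd0 i]
                exact mod_small hd0 (by omega) (by omega)
              omega
            subst hi00
            have hj' : j ≤ (g : ℤ) + 1 := hnext ((g : ℤ) + 1)
              (hy₂one _ (Or.inr ⟨le_refl _, by simp⟩)) (by omega)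
            rcases hj with ⟨hj0, hjd⟩ | ⟨hjG, hjd⟩
            · omega
            · have hjeq : j = (g : ℤ) + 1 := by omega
              rw [hjeq, show ((g : ℤ) + 1 - 0 - 1).toNat = g by omega]
              exact hgS
        · have hj' : j ≤ i + d := hnext (i + d)
            (hy₂one _ (Or.inr ⟨by omega, by
              rw [show i + d - ((g : ℤ) + 1) = (i - ((g : ℤ) + 1)) + d by ring,
                mod_add_self hd0, hid]⟩)) (by omega)
          rcases hj with ⟨hj0, hjd⟩ | ⟨hjG, hjd⟩
          · omega
          · have hge := same_res_step hd0 (show i - ((g:ℤ)+1) < j - ((g:ℤ)+1) by omega)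
              (by rw [hid, hjd])
            have hjeq : j = i + d := by omega
            rw [hjeq, show (i + d - i - 1).toNat = sInf S by omega]
            exact hm₀S
      · intro hfin
        exact absurd hfin hSinf
    -- a preimage of y₂ in the SFT
    have hmem : y₂ ∈ unambigCode D '' ForbidSet (stdForbidden S) := by
      rw [heq]; exact hy₂mem
    obtain ⟨x, hxFS, hphi⟩ := hmem
    have hxgap := (mem_forbid hSinf).1 hxFS
    have hoccx : ∀ i : ℤ,
        ((i ≤ 0 ∧ i % d = 0) ∨ ((g : ℤ) + 1 ≤ i ∧ (i - ((g : ℤ) + 1)) % d = 0)) →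
          OccursAt D x i := by
      intro i hi
      rw [← code_eq_one, congrFun hphi i, hy₂def]
      exact ind_pos hi
    have hnoccx : ∀ i : ℤ, OccursAt D x i →
        ((i ≤ 0 ∧ i % d = 0) ∨ ((g : ℤ) + 1 ≤ i ∧ (i - ((g : ℤ) + 1)) % d = 0)) := by
      intro i hi
      have := code_eq_one.2 hi
      rw [congrFun hphi i, hy₂def] at this
      exact ind_eq_one_iff.1 this
    have hforx := fun i hi => occursAt_iff.1 (hoccx i hi)
    -- forced values on the left
    have hleft : ∀ i : ℤ, i < (D.length : ℤ) → x i = listFun D (i % d) := by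
      intro i hik
      by_cases hi0 : 0 ≤ i
      · have h := hforx 0 (Or.inl ⟨le_refl 0, by simp⟩) i hi0 (by omega)
        rw [show i - 0 = i by ring] at h
        rw [h]
        exact hper' i hi0 hik
      · push_neg at hi0
        have h := hforx (i - i % d)
          (Or.inl ⟨by have := mod_nonneg' hd0 i; omega, sub_mod_self hd0 i⟩) i
          (by have := mod_nonneg' hd0 i; omega) (by have := mod_lt' hd0 i; omega)
        rw [show i - (i - i % d) = i % d by ring] at h
        exact h
    -- forced values on the right
    have hright : ∀ i : ℤ, (g : ℤ) + 1 ≤ i → x i = listFun D ((i - ((g : ℤ) + 1)) % d) := by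
      intro i hi
      have hr0 : 0 ≤ (i - ((g : ℤ) + 1)) % d := mod_nonneg' hd0 _
      have hrd : (i - ((g : ℤ) + 1)) % d < d := mod_lt' hd0 _
      have hrle : (i - ((g : ℤ) + 1)) % d ≤ i - ((g : ℤ) + 1) := mod_le_self hd0 (by omega)
      have h := hforx (i - (i - ((g : ℤ) + 1)) % d)
        (Or.inr ⟨by omega, by
          rw [show (i - (i - ((g : ℤ) + 1)) % d) - ((g : ℤ) + 1)
              = (i - ((g : ℤ) + 1)) - (i - ((g : ℤ) + 1)) % d by ring]
          exact sub_mod_self hd0 _⟩) i (by omega) (by omega)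
      rw [show i - (i - (i - ((g : ℤ) + 1)) % d) = (i - ((g : ℤ) + 1)) % d by ring] at h
      exact h
    -- characterization of ones
    have hone_left : ∀ i : ℤ, i < (D.length : ℤ) → (x i = 1 ↔ i % d = c) := by
      intro i hik
      rw [hleft i hik]
      constructor
      · intro h
        have := huniq _ h
        rwa [mod_mod hd0] at this
      · intro h
        rw [h]
        exact honec
    have hone_right : ∀ i : ℤ, (g : ℤ) + 1 ≤ i →
        (x i = 1 ↔ (i - ((g : ℤ) + 1)) % d = c) := by
      intro i hi
      rw [hright i hi]
      constructor
      · intro h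
        have := huniq _ h
        rwa [mod_mod hd0] at this
      · intro h
        rw [h]
        exact honec
    have hxR₀ : x ((g : ℤ) + 1 + c) = 1 := by
      rw [hone_right _ (by omega), show (g : ℤ) + 1 + c - ((g : ℤ) + 1) = c by ring]
      exact mod_small hd0 hc0 hcd
    -- the position L
    obtain ⟨L, hLdef⟩ : ∃ L : ℤ,
        L = (D.length : ℤ) - 1 - (((D.length : ℤ) - 1 - c) % d) := ⟨_, rfl⟩
    have hLrange : (D.length : ℤ) - d ≤ L ∧ L ≤ (D.length : ℤ) - 1 := by
      have h1 := mod_nonneg' hd0 ((D.length : ℤ) - 1 - c)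
      have h2 := mod_lt' hd0 ((D.length : ℤ) - 1 - c)
      omega
    have hLc : L % d = c := by
      have h1 : (L - c) % d = 0 := by
        rw [show L - c = ((D.length : ℤ) - 1 - c) - ((D.length : ℤ) - 1 - c) % d by
          rw [hLdef]; ring]
        exact sub_mod_self hd0 _
      have h2 : L % d = (c + (L - c)) % d := by ring_nf
      rw [Int.add_emod, h1, add_zero, mod_mod hd0, mod_small hd0 hc0 hcd] at h2
      exact h2
    have hLge : c + d ≤ L := by
      have hcL : c < L := by omega
      exact same_res_step hd0 hcL (by rw [hLc, mod_small hd0 hc0 hcd])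
    have hxL : x L = 1 := (hone_left L (by omega)).2 hLc
    -- common final contradiction
    have hfinal : ((g : ℤ) + 1 + c) % d = c →
        (∀ i : ℤ, L < i → i ≤ (g : ℤ) + 1 + c → (x i = 1 ↔ i % d = c)) → False := by
      intro hR₀c hmid
      have hG1 : ((g : ℤ) + 1) % d = 0 := by
        have h2 : ((g : ℤ) + 1) % d = (((g : ℤ) + 1 + c) % d - c % d) % d := by
          rw [← Int.sub_emod, show (g : ℤ) + 1 + c - c = (g : ℤ) + 1 by ring]
        rw [hR₀c, mod_small hd0 hc0 hcd] at h2
        simpa using h2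
      have hALL : ∀ i : ℤ, x i = 1 ↔ i % d = c := by
        intro i
        rcases le_or_gt i L with h | h
        · exact hone_left i (by omega)
        · rcases le_or_gt i ((g : ℤ) + 1 + c) with h2 | h2
          · exact hmid i h h2
          · have hiG : (g : ℤ) + 1 ≤ i := by omega
            rw [hone_right i hiG]
            rw [Int.sub_emod, hG1, sub_zero, mod_mod hd0]
      have hoccd : OccursAt D x d := by
        rw [occursAt_iff]
        intro p hp1 hp2
        rcases fin2_cases (listFun D (p - d)) with hv | hv
        · rw [hv]
          rcases fin2_cases (x p) with hxp | hxp
          · exact hxp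
          · exfalso
            have hpc := (hALL p).1 hxp
            have hpd : (p - d) % d = c := by
              rw [← mod_add_self hd0 (p - d), show p - d + d = p by ring]
              exact hpc
            have : listFun D (p - d) = 1 := by
              rw [hper' (p - d) (by omega) (by omega), hpd]
              exact honec
            rw [hv] at this
            exact fin2_one_ne_zero this.symm
        · rw [hv]
          apply (hALL p).2
          have := huniq _ hv
          rw [← mod_add_self hd0 (p - d), show p - d + d = p by ring] at this
          exact this
      have hy2d := code_eq_one.2 hoccd
      rw [congrFun hphi d, hy₂def] at hy2d
      rcases ind_eq_one_iff.1 hy2d with ⟨h, _⟩ | ⟨h, _⟩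
      · omega
      · omega
    rcases le_or_gt ((g : ℤ) + 1 + c) L with hRL | hLR
    · -- R₀ ≤ L
      exact hfinal ((hone_left _ (by omega)).1 hxR₀) (fun i h1 h2 => absurd h1 (by omega))
    · -- L < R₀ : chain argument
      have hstep : ∀ t : ℤ, c < t → t < (g : ℤ) + 1 + c → x t = 1 →
          (x (t + d) = 1 ∧ (∀ l : ℤ, t < l → l < t + d → x l = 0) ∧
            t + d ≤ (g : ℤ) + 1 + c) := by
        intro t htc htR hxt
        obtain ⟨q, hq1, hq2, hq3, hq4⟩ := nextOne htR hxR₀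
        have hgapS := hxgap t q hq1 hxt hq3 hq4
        rcases hsecond _ hgapS with hmm | hgg
        · have hqeq : q = t + d := by omega
          subst hqeq
          exact ⟨hq3, hq4, hq2⟩
        · exfalso
          omega
      have hchain : ∀ n : ℕ, ∀ t : ℤ, ((g : ℤ) + 1 + c - t).toNat ≤ n → c < t →
          t ≤ (g : ℤ) + 1 + c → t % d = c → x t = 1 →
          (((g : ℤ) + 1 + c) % d = c ∧
            ∀ l : ℤ, t < l → l ≤ (g : ℤ) + 1 + c → (x l = 1 ↔ l % d = c)) := by
        intro n
        induction n with
        | zero =>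
          intro t h1 h2 h3 h4 h5
          have hteq : t = (g : ℤ) + 1 + c := by omega
          subst hteq
          exact ⟨h4, fun l hl1 hl2 => absurd hl1 (by omega)⟩
        | succ n ih =>
          intro t h1 h2 h3 h4 h5
          by_cases hteq : t = (g : ℤ) + 1 + c
          · subst hteq
            exact ⟨h4, fun l hl1 hl2 => absurd hl1 (by omega)⟩
          · have htR : t < (g : ℤ) + 1 + c := by omega
            obtain ⟨hxd1, hzero, hle⟩ := hstep t h2 htR h5
            have hrec := ih (t + d) (by omega) (by omega) hle
              (by rw [mod_add_self hd0]; exact h4) hxd1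
            refine ⟨hrec.1, ?_⟩
            intro l hl1 hl2
            rcases lt_trichotomy l (t + d) with hl | hl | hl
            · have hxl : x l = 0 := hzero l hl1 hl
              constructor
              · intro hcon
                rw [hxl] at hcon
                exact absurd hcon.symm fin2_one_ne_zero
              · intro hcon
                exfalso
                have := same_res_step hd0 hl1 (by rw [h4, hcon])
                omega
            · subst hl
              exact iff_of_true hxd1 (by rw [mod_add_self hd0]; exact h4)
            · exact hrec.2 l hl hl2
      obtain ⟨hR₀c, hmid⟩ := hchain ((g : ℤ) + 1 + c - L).toNat L (le_refl _)
        (by omega) (by omega) hLc hxL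
      exact hfinal hR₀c hmid

lemma core1 (D : List (Fin 2)) (hk : 0 < D.length) (S : Set ℕ)
    (hYS : unambigCode D '' (Set.univ : Set (ℤ → Fin 2)) = GapShift S)
    (h1 : D.count 1 ≤ 1) :
    Set.InjOn (unambigCode D) (ForbidSet (stdForbidden S)) ∧
      unambigCode D '' ForbidSet (stdForbidden S) = GapShift S := by
  rcases Nat.le_one_iff_eq_zero_or_eq_one.1 h1 with h | h
  · exact coreA D hk S hYS (count_one_zero D h)
  · obtain ⟨a, b, hab⟩ := count_one_structure D h
    subst hab
    refine coreB _ S hYS a ?_ (single_one_get a b)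
    simp +arith

lemma finiteToOne_of_injOn {Z : Set (ℤ → Fin 2)} {φ : (ℤ → Fin 2) → (ℤ → Fin 2)}
    (h : Set.InjOn φ Z) : FiniteToOneOn φ Z := by
  refine ⟨1, fun y => ?_⟩
  have hsub : ({x ∈ Z | φ x = y}).Subsingleton := by
    intro x1 hx1 x2 hx2
    exact h hx1.1 hx2.1 (hx1.2.trans hx2.2.symm)
  refine ⟨hsub.finite, ?_⟩
  rcases Set.eq_empty_or_nonempty ({x ∈ Z | φ x = y}) with he | ⟨x0, hx0⟩
  · rw [he]
    simp
  · have hss : ({x ∈ Z | φ x = y}) ⊆ {x0} := fun z hz => hsub hz hx0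
    calc ({x ∈ Z | φ x = y}).ncard ≤ ({x0} : Set (ℤ → Fin 2)).ncard :=
          Set.ncard_le_ncard hss (Set.finite_singleton x0)
      _ = 1 := Set.ncard_singleton x0


/-- for the factor code `φ` with unambiguous symbol `D` on the full 2-shift,
with image the `S`-gap shift `Y = X(S)`, `ℱ` the standard forbidden set of `Y` and `ℱ̄`
its bitwise complement, the following are equivalent:
(1) one of the symbols `0`, `1` occurs at most once in `D`;
(2) `φ|_{X_ℱ}` or `φ|_{X_ℱ̄}` is one-to-one and onto `Y`;
(3) `φ|_{X_ℱ}` or `φ|_{X_ℱ̄}` is finite-to-one and onto `Y`;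
(4) `φ|_{X_ℱ}` or `φ|_{X_ℱ̄}` is onto `Y`. -/
theorem statement4 (D : List (Fin 2)) (hk : 0 < D.length)
    (S : Set ℕ) (hYS : unambigCode D '' (Set.univ : Set (ℤ → Fin 2)) = GapShift S) :
    [D.count 0 ≤ 1 ∨ D.count 1 ≤ 1,
     ((Set.InjOn (unambigCode D) (ForbidSet (stdForbidden S)) ∧
         unambigCode D '' ForbidSet (stdForbidden S) = GapShift S) ∨
       (Set.InjOn (unambigCode D) (ForbidSet (complWords (stdForbidden S))) ∧
         unambigCode D '' ForbidSet (complWords (stdForbidden S)) = GapShift S)),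
     ((FiniteToOneOn (unambigCode D) (ForbidSet (stdForbidden S)) ∧
         unambigCode D '' ForbidSet (stdForbidden S) = GapShift S) ∨
       (FiniteToOneOn (unambigCode D) (ForbidSet (complWords (stdForbidden S))) ∧
         unambigCode D '' ForbidSet (complWords (stdForbidden S)) = GapShift S)),
     (unambigCode D '' ForbidSet (stdForbidden S) = GapShift S ∨
       unambigCode D '' ForbidSet (complWords (stdForbidden S)) = GapShift S)].TFAE := by
  tfae_have 1 → 2
  · rintro (h0 | h1)
    · right
      have hYS' := hYS_compl hYS
      have hk' : 0 < (D.map bitCompl).length := by simpa using hk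
      have hcnt : (D.map bitCompl).count 1 ≤ 1 := by
        rw [(count_map_compl D).1]
        exact h0
      obtain ⟨hinj, himg⟩ := core1 (D.map bitCompl) hk' S hYS' hcnt
      constructor
      · exact (injOn_compl D (stdForbidden S)).2 hinj
      · rw [image_on_compl D (stdForbidden S)]
        exact himg
    · left
      exact core1 D hk S hYS h1
  tfae_have 2 → 3
  · rintro (⟨hinj, himg⟩ | ⟨hinj, himg⟩)
    · exact Or.inl ⟨finiteToOne_of_injOn hinj, himg⟩
    · exact Or.inr ⟨finiteToOne_of_injOn hinj, himg⟩
  tfae_have 3 → 4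
  · rintro (⟨_, himg⟩ | ⟨_, himg⟩)
    · exact Or.inl himg
    · exact Or.inr himg
  tfae_have 4 → 1
  · intro h4
    by_contra hcon
    push_neg at hcon
    obtain ⟨h0, h1⟩ := hcon
    rcases h4 with himg | himg
    · exact notOnto D S hYS (by omega) (by omega) himg
    · rw [image_on_compl D (stdForbidden S)] at himg
      refine notOnto (D.map bitCompl) S (hYS_compl hYS) ?_ ?_ himg
      · rw [(count_map_compl D).1]
        omega
      · rw [(count_map_compl D).2]
        omega
  tfae_finish
end
end

section
/- Assume the residue-set setting with an admissible subset P ⊆ T_1. Let i_1, i_2 ∈ P with K_{i_1} ∩ K_{i_2} ≠ ∅. Then for every j ∈ K_{i_1} ∖ K_{i_2} there exists i_3 ∈ P ∖ {i_1, i_2} such that j ∈ K_{i_3} and K_{i_2} ∩ K_{i_3} = ∅. -/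
/-!
Suppose no such `i₃` exists. Then every spoke `i ∈ P` whose residue class contains `j` meets
`K_{i₂}` (for `i = i₁` this is the hypothesis `K_{i₁} ∩ K_{i₂} ≠ ∅`). Residue classes have the
Helly property: classes that pairwise meet have a common point, by the Chinese remainder theorem
for non-coprime moduli. Here the classes through `j` together with `K_{i₂}` pairwise meet, so
some `n` lies in all of them. Then `R_j ∩ P ⊆ R_n ∩ P`, and `i₂` lies in the right-hand side but
not the left, contradicting admissibility.
-/

open Set

/-- The set of residues `{n ∈ {0,…,D−1} : n ≡ a (mod d)}`. -/
def resK (D d a : ℕ) : Set ℕ := {n | n < D ∧ n % d = a}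

/-- `R_j ∩ P = {i ∈ P : j ∈ K i}`. -/
def resR {T : Type*} (P : Set T) (K : T → Set ℕ) (j : ℕ) : Set T := {i ∈ P | j ∈ K i}

/-- Admissibility of `P ⊆ T₁` in the residue-set setting: `P` is nonempty,
`∪_{i∉P} K_i ⊆ ∪_{i∈P} K_i`, and `R_{j'} ∩ P ⊆ R_j ∩ P` implies
`R_{j'} ∩ P = R_j ∩ P` for all `j, j' ∈ {0,…,D−1}`. -/
def ResAdmissible {T : Type*} (D : ℕ) (K : T → Set ℕ) (P : Set T) : Prop :=
  P.Nonempty ∧ (⋃ i ∈ Pᶜ, K i) ⊆ (⋃ i ∈ P, K i) ∧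
    ∀ j j' : ℕ, j < D → j' < D → resR P K j' ⊆ resR P K j → resR P K j' = resR P K j

theorem Nat.gcd_lcm_dvd_lcm_gcd (x y c : ℕ) :
    gcd (lcm x y) c ∣ lcm (gcd x c) (gcd y c) := by
  rcases eq_or_ne x 0 with rfl | hx
  · simpa using dvd_lcm_left c (gcd y c)
  rcases eq_or_ne y 0 with rfl | hy
  · simpa using dvd_lcm_right (gcd x c) c
  rcases eq_or_ne c 0 with rfl | hc
  · simp
  have hgx : gcd x c ≠ 0 := gcd_ne_zero_right hc
  have hgy : gcd y c ≠ 0 := gcd_ne_zero_right hc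
  rw [← factorization_le_iff_dvd (gcd_ne_zero_right hc) (lcm_ne_zero hgx hgy),
    factorization_gcd (lcm_ne_zero hx hy) hc, factorization_lcm hx hy,
    factorization_lcm hgx hgy, factorization_gcd hx hc, factorization_gcd hy hc]
  intro p
  exact (min_max_distrib_right _ _ _).le

theorem Nat.ModEq.gcd_finset_lcm {a b c : ℕ} (S : Finset ℕ)
    (h : ∀ m ∈ S, a ≡ b [MOD gcd m c]) : a ≡ b [MOD gcd (S.lcm id) c] := by
  classical
  induction S using Finset.induction with
  | empty => simp [Nat.modEq_one]
  | insert m S _ ih =>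
    rw [Finset.lcm_insert]
    exact (Nat.mod_lcm (h m (S.mem_insert_self m))
      (ih fun k hk => h k (Finset.mem_insert_of_mem hk))).of_dvd (Nat.gcd_lcm_dvd_lcm_gcd _ _ _)

theorem Nat.exists_modEq_forall_of_modEq_gcd {a b c : ℕ} (S : Finset ℕ)
    (h : ∀ m ∈ S, a ≡ b [MOD gcd m c]) :
    ∃ n, n ≡ b [MOD c] ∧ ∀ m ∈ S, n ≡ a [MOD m] := by
  obtain ⟨n, hna, hnb⟩ := Nat.chineseRemainder' (Nat.ModEq.gcd_finset_lcm S h)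
  exact ⟨n, hnb, fun m hm => hna.of_dvd (Finset.dvd_lcm hm)⟩

theorem mod_mem_resK {D d a n : ℕ} (hD : 0 < D) (hd : d ∣ D) (hn : n % d = a) :
    n % D ∈ resK D d a :=
  ⟨Nat.mod_lt n hD, by rw [Nat.mod_mod_of_dvd n hd, hn]⟩

theorem exists_mem_resK_forall_of_inter_nonempty {T : Type*} {D d₀ a₀ j : ℕ} {d a : T → ℕ}
    {Q : Set T} (hd₀ : d₀ ∣ D) (hd : ∀ i ∈ Q, d i ∣ D) (h₀ : (resK D d₀ a₀).Nonempty)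
    (hj : ∀ i ∈ Q, j ∈ resK D (d i) (a i))
    (hmeet : ∀ i ∈ Q, (resK D d₀ a₀ ∩ resK D (d i) (a i)).Nonempty) :
    ∃ n ∈ resK D d₀ a₀, ∀ i ∈ Q, n ∈ resK D (d i) (a i) := by
  classical
  obtain ⟨x₀, hx₀D, hx₀⟩ := h₀
  have hD : 0 < D := by omega
  -- Only finitely many moduli occur, since they all divide `D`.
  let S := D.divisors.filter fun m => ∃ i ∈ Q, d i = m
  have hmem : ∀ i ∈ Q, d i ∈ S := fun i hi =>
    Finset.mem_filter.2 ⟨Nat.mem_divisors.2 ⟨hd i hi, hD.ne'⟩, i, hi, rfl⟩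
  have hcompat : ∀ m ∈ S, j ≡ x₀ [MOD Nat.gcd m d₀] := by
    intro m hm
    obtain ⟨i, hi, rfl⟩ := (Finset.mem_filter.1 hm).2
    obtain ⟨y, hy₀, hyi⟩ := hmeet i hi
    calc j ≡ y [MOD Nat.gcd (d i) d₀] :=
          Nat.ModEq.of_dvd (Nat.gcd_dvd_left _ _) ((hj i hi).2.trans hyi.2.symm)
      _ ≡ x₀ [MOD Nat.gcd (d i) d₀] :=
          Nat.ModEq.of_dvd (Nat.gcd_dvd_right _ _) (hy₀.2.trans hx₀.symm)
  obtain ⟨n, hn₀, hn⟩ := Nat.exists_modEq_forall_of_modEq_gcd S hcompat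
  exact ⟨n % D, mod_mem_resK hD hd₀ (Eq.trans hn₀ hx₀),
    fun i hi => mod_mem_resK hD (hd i hi) (Eq.trans (hn _ (hmem i hi)) (hj i hi).2)⟩

theorem statement8_general {T : Type*} (D : ℕ)
    (d a : T → ℕ) (hdvd : ∀ i, d i ∣ D)
    (P : Set T) (hP : ResAdmissible D (fun i => resK D (d i) (a i)) P)
    (i₁ i₂ : T) (h2 : i₂ ∈ P)
    (hint : (resK D (d i₁) (a i₁) ∩ resK D (d i₂) (a i₂)).Nonempty)
    (j : ℕ) (hj : j ∈ resK D (d i₁) (a i₁) \ resK D (d i₂) (a i₂)) :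
    ∃ i₃ ∈ P, i₃ ≠ i₁ ∧ i₃ ≠ i₂ ∧ j ∈ resK D (d i₃) (a i₃) ∧
      resK D (d i₂) (a i₂) ∩ resK D (d i₃) (a i₃) = ∅ := by
  set K : T → Set ℕ := fun i => resK D (d i) (a i)
  by_contra hcon
  push Not at hcon
  have hmeet : ∀ i ∈ resR P K j, (K i₂ ∩ K i).Nonempty := by
    rintro i ⟨hiP, hji⟩
    by_cases hi₁ : i = i₁
    · exact hi₁ ▸ (inter_comm (K i₁) (K i₂)) ▸ hint
    by_cases hi₂ : i = i₂
    · exact absurd (hi₂ ▸ hji) hj.2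
    exact hcon i hiP hi₁ hi₂ hji
  obtain ⟨n, hn₂, hn⟩ := exists_mem_resK_forall_of_inter_nonempty (hdvd i₂)
    (fun i _ => hdvd i) (hint.mono inter_subset_right) (fun i hi => hi.2) hmeet
  have hsub : resR P K j ⊆ resR P K n := fun i hi => ⟨hi.1, hn i hi⟩
  have heq := hP.2.2 n j hn₂.1 hj.1.1 hsub
  exact hj.2 (heq ▸ ⟨h2, hn₂⟩ : i₂ ∈ resR P K j).2

/-- in the residue-set setting with admissible `P`, if `i₁, i₂ ∈ P` with
`K_{i₁} ∩ K_{i₂} ≠ ∅`, then for every `j ∈ K_{i₁} ∖ K_{i₂}` there is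
`i₃ ∈ P ∖ {i₁, i₂}` with `j ∈ K_{i₃}` and `K_{i₂} ∩ K_{i₃} = ∅`. -/
theorem statement8 {T : Type*} [Fintype T] (D : ℕ) (hD : 0 < D)
    (d a : T → ℕ) (hdvd : ∀ i, d i ∣ D) (hd : ∀ i, 0 < d i) (ha : ∀ i, a i < d i)
    (P : Set T) (hP : ResAdmissible D (fun i => resK D (d i) (a i)) P)
    (i₁ i₂ : T) (h1 : i₁ ∈ P) (h2 : i₂ ∈ P)
    (hint : (resK D (d i₁) (a i₁) ∩ resK D (d i₂) (a i₂)).Nonempty)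
    (j : ℕ) (hj : j ∈ resK D (d i₁) (a i₁) \ resK D (d i₂) (a i₂)) :
    ∃ i₃ ∈ P, i₃ ≠ i₁ ∧ i₃ ≠ i₂ ∧ j ∈ resK D (d i₃) (a i₃) ∧
      resK D (d i₂) (a i₂) ∩ resK D (d i₃) (a i₃) = ∅ :=
  statement8_general D d a hdvd P hP i₁ i₂ h2 hint j hj
end

section
/- Assume the residue-set setting with an admissible subset P ⊆ T_1. If ∩_{i∈P} K_i ≠ ∅, then there exists a subset W ⊆ T_1 such that the sets {K_i : i ∈ W} are pairwise disjoint and ∪_{i∈W} K_i = ∪_{i∈T_1} K_i (indeed, in this case K_i = ∪_{i'∈T_1} K_{i'} for every i ∈ P, so W may be taken to be a single element of P). -/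
open Set

/-- in the residue-set setting with admissible `P`, if `∩_{i∈P} K_i ≠ ∅`
then there is `W ⊆ T₁` with the `K_i`, `i ∈ W`, pairwise disjoint and
`∪_{i∈W} K_i = ∪_{i∈T₁} K_i`; indeed `K_i = ∪_{i'∈T₁} K_{i'}` for every `i ∈ P` and
`W` may be taken to be a single element of `P`. -/
theorem statement9 {T : Type*} [Fintype T] (D : ℕ) (hD : 0 < D)
    (d a : T → ℕ) (hdvd : ∀ i, d i ∣ D) (hd : ∀ i, 0 < d i) (ha : ∀ i, a i < d i)
    (P : Set T) (hP : ResAdmissible D (fun i => resK D (d i) (a i)) P)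
    (hint : (⋂ i ∈ P, resK D (d i) (a i)).Nonempty) :
    (∀ i ∈ P, resK D (d i) (a i) = ⋃ i' : T, resK D (d i') (a i')) ∧
      ∃ W : Set T, (∃ i₀ ∈ P, W = {i₀}) ∧
        (W.Pairwise fun i i' => Disjoint (resK D (d i) (a i)) (resK D (d i') (a i'))) ∧
        (⋃ i ∈ W, resK D (d i) (a i)) = ⋃ i : T, resK D (d i) (a i) := by
  obtain ⟨j₀, hj₀⟩ := hint
  simp only [mem_iInter] at hj₀
  obtain ⟨i₀, hi₀⟩ := hP.1
  have hj₀D : j₀ < D := (hj₀ i₀ hi₀).1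
  have hR : resR P (fun i => resK D (d i) (a i)) j₀ = P := by
    ext i
    exact ⟨fun h => h.1, fun hi => ⟨hi, hj₀ i hi⟩⟩
  have key : ∀ i ∈ P, resK D (d i) (a i) = ⋃ i' : T, resK D (d i') (a i') := by
    intro i hi
    apply Subset.antisymm (subset_iUnion _ i)
    intro n hn
    simp only [mem_iUnion] at hn
    obtain ⟨i', hn'⟩ := hn
    have heq := hP.2.2 j₀ n hj₀D hn'.1 (by rw [hR]; exact fun x hx => hx.1)
    have hmem : i ∈ resR P (fun i => resK D (d i) (a i)) n := by
      rw [heq, hR]; exact hi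
    exact hmem.2
  refine ⟨key, {i₀}, ⟨i₀, hi₀, rfl⟩, Set.pairwise_singleton _ _, ?_⟩
  simp [key i₀ hi₀]
end

section
/- Assume the residue-set setting with an admissible subset P ⊆ T_1. If K_{i_1} ∩ K_{i_2} ≠ ∅ for every pair i_1, i_2 ∈ P, then there exists a subset W ⊆ T_1 such that the sets {K_i : i ∈ W} are pairwise disjoint and ∪_{i∈W} K_i = ∪_{i∈T_1} K_i. -/
open Set

/-- Distributivity of gcd over lcm in ℕ. -/
lemma nat_gcd_lcm_distrib (k m n : ℕ) (hk : k ≠ 0) (hm : m ≠ 0) (hn : n ≠ 0) :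
    Nat.gcd k (Nat.lcm m n) = Nat.lcm (Nat.gcd k m) (Nat.gcd k n) := by
  have hlcm : Nat.lcm m n ≠ 0 := Nat.lcm_ne_zero hm hn
  have hgm : Nat.gcd k m ≠ 0 := Nat.gcd_ne_zero_left hk
  have hgn : Nat.gcd k n ≠ 0 := Nat.gcd_ne_zero_left hk
  refine Nat.eq_of_factorization_eq (Nat.gcd_ne_zero_left hk) (Nat.lcm_ne_zero hgm hgn)
    fun p => ?_
  rw [Nat.factorization_gcd hk hlcm, Nat.factorization_lcm hm hn,
    Nat.factorization_lcm hgm hgn, Nat.factorization_gcd hk hm, Nat.factorization_gcd hk hn]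
  simp only [Finsupp.inf_apply, Finsupp.sup_apply]
  exact inf_sup_left _ _ _

/-- Distributivity of gcd over a finset lcm in ℕ. -/
lemma nat_gcd_finsetLcm_distrib {T : Type*} [DecidableEq T] (k : ℕ) (hk : k ≠ 0)
    (d : T → ℕ) (hd : ∀ i, d i ≠ 0) (s : Finset T) :
    Nat.gcd k (s.lcm d) = s.lcm (fun i => Nat.gcd k (d i)) := by
  induction s using Finset.induction_on with
  | empty => simp [Nat.gcd_one_right k]
  | @insert i0 s hi0 ih =>
      rw [Finset.lcm_insert, Finset.lcm_insert, lcm_eq_nat_lcm, lcm_eq_nat_lcm]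
      have hslcm : s.lcm d ≠ 0 := by
        intro h
        have := Finset.lcm_eq_zero_iff.mp h
        obtain ⟨i, _, hi⟩ := this
        exact hd i hi
      rw [nat_gcd_lcm_distrib k (d i0) (s.lcm d) hk (hd i0) hslcm, ih]

/-- If `x ≡ y` modulo each `f i`, `i ∈ s`, then `x ≡ y` modulo the lcm. -/
lemma modEq_finsetLcm {T : Type*} [DecidableEq T] (s : Finset T) (f : T → ℕ) {x y : ℕ}
    (h : ∀ i ∈ s, x ≡ y [MOD f i]) : x ≡ y [MOD s.lcm f] := by
  induction s using Finset.induction_on with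
  | empty => simp [Nat.modEq_one]
  | @insert i0 s hi0 ih =>
      rw [Finset.lcm_insert, lcm_eq_nat_lcm]
      have h1 := h i0 (Finset.mem_insert_self _ _)
      have h2 := ih fun i hi => h i (Finset.mem_insert_of_mem hi)
      rw [Nat.modEq_iff_dvd] at h1 h2 ⊢
      have : (Int.lcm ((f i0 : ℕ) : ℤ) ((s.lcm f : ℕ) : ℤ) : ℤ) ∣ (y : ℤ) - x := Int.coe_lcm_dvd h1 h2
      simpa [Int.lcm] using this

/-- Helly property / CRT: pairwise compatible congruences are simultaneously solvable. -/
lemma helly_crt {T : Type*} [DecidableEq T] (d a : T → ℕ) (hd : ∀ i, 0 < d i) (s : Finset T)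
    (compat : ∀ i ∈ s, ∀ i' ∈ s, a i ≡ a i' [MOD Nat.gcd (d i) (d i')]) :
    ∃ x, ∀ i ∈ s, x ≡ a i [MOD d i] := by
  induction s using Finset.induction_on with
  | empty => exact ⟨0, by simp⟩
  | @insert i0 s hi0 ih =>
      obtain ⟨x, hx⟩ := ih fun i hi i' hi' =>
        compat i (Finset.mem_insert_of_mem hi) i' (Finset.mem_insert_of_mem hi')
      have hd' : ∀ i, d i ≠ 0 := fun i => (hd i).ne'
      have hkey : a i0 ≡ x [MOD Nat.gcd (d i0) (s.lcm d)] := by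
        rw [nat_gcd_finsetLcm_distrib (d i0) (hd' i0) d hd' s]
        refine modEq_finsetLcm s _ fun i hi => ?_
        have h1 : a i0 ≡ a i [MOD Nat.gcd (d i0) (d i)] :=
          compat i0 (Finset.mem_insert_self _ _) i (Finset.mem_insert_of_mem hi)
        have h2 : x ≡ a i [MOD Nat.gcd (d i0) (d i)] :=
          (hx i hi).of_dvd (Nat.gcd_dvd_right _ _)
        exact h1.trans h2.symm
      obtain ⟨k, hk1, hk2⟩ := Nat.chineseRemainder' hkey
      refine ⟨k, fun i hi => ?_⟩
      rcases Finset.mem_insert.mp hi with rfl | hi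
      · exact hk1
      · exact (hk2.of_dvd (Finset.dvd_lcm hi)).trans (hx i hi)

/-- in the residue-set setting with admissible `P`, if the `K_i`, `i ∈ P`,
pairwise intersect, then there is `W ⊆ T₁` with the `K_i`, `i ∈ W`, pairwise disjoint
and `∪_{i∈W} K_i = ∪_{i∈T₁} K_i`. -/
theorem statement10 {T : Type*} [Fintype T] (D : ℕ) (hD : 0 < D)
    (d a : T → ℕ) (hdvd : ∀ i, d i ∣ D) (hd : ∀ i, 0 < d i) (ha : ∀ i, a i < d i)
    (P : Set T) (hP : ResAdmissible D (fun i => resK D (d i) (a i)) P)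
    (hint : ∀ i₁ ∈ P, ∀ i₂ ∈ P, (resK D (d i₁) (a i₁) ∩ resK D (d i₂) (a i₂)).Nonempty) :
    ∃ W : Set T,
      (W.Pairwise fun i i' => Disjoint (resK D (d i) (a i)) (resK D (d i') (a i'))) ∧
      (⋃ i ∈ W, resK D (d i) (a i)) = ⋃ i : T, resK D (d i) (a i) := by
  classical
  set K : T → Set ℕ := fun i => resK D (d i) (a i) with hK
  obtain ⟨hPne, _, hanti⟩ := hP
  -- pairwise compatibility of the congruences on P
  set s : Finset T := (Set.toFinite P).toFinset with hs
  have hmem : ∀ i, i ∈ s ↔ i ∈ P := fun i => Set.Finite.mem_toFinset _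
  have compat : ∀ i ∈ s, ∀ i' ∈ s, a i ≡ a i' [MOD Nat.gcd (d i) (d i')] := by
    intro i hi i' hi'
    obtain ⟨n, hn1, hn2⟩ := hint i ((hmem i).mp hi) i' ((hmem i').mp hi')
    have e1 : n ≡ a i [MOD d i] := by
      unfold Nat.ModEq
      rw [hn1.2, Nat.mod_eq_of_lt (ha i)]
    have e2 : n ≡ a i' [MOD d i'] := by
      unfold Nat.ModEq
      rw [hn2.2, Nat.mod_eq_of_lt (ha i')]
    exact ((e1.of_dvd (Nat.gcd_dvd_left _ _)).symm.trans
      (e2.of_dvd (Nat.gcd_dvd_right _ _)))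
  obtain ⟨x, hx⟩ := helly_crt d a hd s compat
  -- j0 := x % D lies in every K i, i ∈ P
  set j0 := x % D with hj0
  have hj0lt : j0 < D := Nat.mod_lt _ hD
  have hj0mem : ∀ i ∈ P, j0 ∈ K i := by
    intro i hi
    have hxi := hx i ((hmem i).mpr hi)
    refine ⟨hj0lt, ?_⟩
    rw [hj0, Nat.mod_mod_of_dvd x (hdvd i)]
    have := hxi
    unfold Nat.ModEq at this
    rw [this, Nat.mod_eq_of_lt (ha i)]
  have hR0 : resR P K j0 = P := by
    ext i
    exact ⟨fun h => h.1, fun h => ⟨h, hj0mem i h⟩⟩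
  -- admissibility forces every j < D to be in every K i, i ∈ P
  have key : ∀ j, j < D → ∀ i ∈ P, j ∈ K i := by
    intro j hj i hi
    have hsub : resR P K j ⊆ resR P K j0 := by
      rw [hR0]; exact fun i' hi' => hi'.1
    have heq := hanti j0 j hj0lt hj hsub
    have : i ∈ resR P K j := by rw [heq, hR0]; exact hi
    exact this.2
  obtain ⟨i0, hi0⟩ := hPne
  refine ⟨{i0}, Set.pairwise_singleton _ _, ?_⟩
  ext n
  simp only [Set.mem_iUnion, Set.mem_singleton_iff, exists_prop, exists_eq_left]
  constructor
  · intro h; exact ⟨i0, h⟩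
  · rintro ⟨i, hi⟩
    exact key n hi.1 i0 hi0
end

section
/- Assume the residue-set setting with an admissible subset P ⊆ T_1. If |P| ≤ 5, then there exists a subset W ⊆ T_1 such that the sets {K_i : i ∈ W} are pairwise disjoint and ∪_{i∈W} K_i = ∪_{i∈T_1} K_i. -/
open Set

private lemma dvd_sub_of_mod {z c c' e b : ℕ} (h : (z + c) % e = b) (h' : (z + c') % e = b)
    (hle : c ≤ c') : e ∣ c' - c := by
  have hm : z + c ≡ z + c' [MOD e] := h.trans h'.symm
  have := (Nat.modEq_iff_dvd' (by omega)).mp hm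
  simpa [Nat.add_sub_add_left] using this

private lemma not_dvd_of_mod {z c e b : ℕ} (h : (z + c) % e = b) (hz : z % e ≠ b) : ¬ e ∣ c := by
  rintro ⟨k, rfl⟩
  exact hz (by simpa [Nat.add_mul_mod_self_left] using h)

private lemma five_cover {T : Type*} [Finite T] (P : Set T) (h5 : P.ncard ≤ 5)
    (x1 x2 x3 x4 x5 : T) (h1 : x1 ∈ P) (h2 : x2 ∈ P) (h3 : x3 ∈ P) (h4 : x4 ∈ P) (h5' : x5 ∈ P)
    (d12 : x1 ≠ x2) (d13 : x1 ≠ x3) (d14 : x1 ≠ x4) (d15 : x1 ≠ x5)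
    (d23 : x2 ≠ x3) (d24 : x2 ≠ x4) (d25 : x2 ≠ x5)
    (d34 : x3 ≠ x4) (d35 : x3 ≠ x5) (d45 : x4 ≠ x5)
    {x : T} (hx : x ∈ P) : x = x1 ∨ x = x2 ∨ x = x3 ∨ x = x4 ∨ x = x5 := by
  by_contra h
  push_neg at h
  obtain ⟨e1, e2, e3, e4, e5⟩ := h
  have hsub : ({x, x1, x2, x3, x4, x5} : Set T) ⊆ P := by
    intro y hy
    simp only [Set.mem_insert_iff, Set.mem_singleton_iff] at hy
    rcases hy with rfl|rfl|rfl|rfl|rfl|rfl <;> assumption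
  have hcard : ({x, x1, x2, x3, x4, x5} : Set T).ncard = 6 := by
    rw [Set.ncard_insert_of_notMem (by simp [e1, e2, e3, e4, e5]),
        Set.ncard_insert_of_notMem (by simp [d12, d13, d14, d15]),
        Set.ncard_insert_of_notMem (by simp [d23, d24, d25]),
        Set.ncard_insert_of_notMem (by simp [d34, d35]),
        Set.ncard_insert_of_notMem (by simp [d45]), Set.ncard_singleton]
  have := Set.ncard_le_ncard hsub P.toFinite
  omega

private lemma divisors_incomp {d1 d2 L : ℕ} (n1 : ¬ d1 ∣ d2) (n2 : ¬ d2 ∣ d1)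
    (h1 : d1 ∣ L) (h2 : d2 ∣ L) (hL : 0 < L) (h6 : L ≤ 6 ∨ L = 8) :
    L = 6 ∧ ((d1 = 2 ∧ d2 = 3) ∨ (d1 = 3 ∧ d2 = 2)) := by
  have b1 := Nat.le_of_dvd hL h1
  have b2 := Nat.le_of_dvd hL h2
  have p1 : 0 < d1 := Nat.pos_of_dvd_of_pos h1 hL
  have p2 : 0 < d2 := Nat.pos_of_dvd_of_pos h2 hL
  have hL8 : L ≤ 8 := by omega
  interval_cases L <;> interval_cases d1 <;> interval_cases d2 <;> omega

private lemma pick23 {d1 d2 : ℕ} (h1 : d1 ∣ 6) (h2 : d2 ∣ 6) (n1 : ¬ d1 ∣ d2) (n2 : ¬ d2 ∣ d1) :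
    (d1 = 2 ∧ d2 = 3) ∨ (d1 = 3 ∧ d2 = 2) := by
  have b1 : d1 ≤ 6 := Nat.le_of_dvd (by norm_num) h1
  have b2 : d2 ≤ 6 := Nat.le_of_dvd (by norm_num) h2
  have p1 : 0 < d1 := Nat.pos_of_dvd_of_pos h1 (by norm_num)
  have p2 : 0 < d2 := Nat.pos_of_dvd_of_pos h2 (by norm_num)
  interval_cases d1 <;> interval_cases d2 <;> omega

private lemma pin2 {e : ℕ} (h1 : e ∣ 2) (h2 : ¬ e ∣ 1) : e = 2 := by
  have hb := Nat.le_of_dvd (by norm_num) h1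
  have hp : 0 < e := Nat.pos_of_dvd_of_pos h1 (by norm_num)
  interval_cases e <;> omega

private lemma pin3 {e : ℕ} (h1 : e ∣ 3) (h2 : ¬ e ∣ 1) : e = 3 := by
  have hb := Nat.le_of_dvd (by norm_num) h1
  have hp : 0 < e := Nat.pos_of_dvd_of_pos h1 (by norm_num)
  interval_cases e <;> omega

private lemma pin3b {e : ℕ} (h1 : e ∣ 3) (h2 : ¬ e ∣ 2) : e = 3 := by
  have hb := Nat.le_of_dvd (by norm_num) h1
  have hp : 0 < e := Nat.pos_of_dvd_of_pos h1 (by norm_num)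
  interval_cases e <;> omega

private lemma pin2b {e : ℕ} (h1 : e ∣ 2) (h2 : ¬ e ∣ 3) : e = 2 := by
  have hb := Nat.le_of_dvd (by norm_num) h1
  have hp : 0 < e := Nat.pos_of_dvd_of_pos h1 (by norm_num)
  interval_cases e <;> omega

private lemma pin26 {e : ℕ} (h1 : e ∣ 6) (h2 : ¬ e ∣ 3) : e = 2 ∨ e = 6 := by
  have hb := Nat.le_of_dvd (by norm_num) h1
  have hp : 0 < e := Nat.pos_of_dvd_of_pos h1 (by norm_num)
  interval_cases e <;> omega

private lemma c24 {e : ℕ} (h1 : e ∣ 2) (h2 : ¬ e ∣ 4) : False := by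
  have hb := Nat.le_of_dvd (by norm_num) h1
  have hp : 0 < e := Nat.pos_of_dvd_of_pos h1 (by norm_num)
  interval_cases e <;> omega

private lemma kill {T : Type*} (D : ℕ) (hD : 0 < D)
    (d a : T → ℕ) (P : Set T)
    (hac : ∀ j j' : ℕ, j < D → j' < D →
      resR P (fun i => resK D (d i) (a i)) j' ⊆ resR P (fun i => resK D (d i) (a i)) j →
      resR P (fun i => resK D (d i) (a i)) j' = resR P (fun i => resK D (d i) (a i)) j)
    (u v w1 w2 w3 : T) (hu : u ∈ P) (hw1 : w1 ∈ P)
    (hcover : ∀ x ∈ P, x = u ∨ x = v ∨ x = w1 ∨ x = w2 ∨ x = w3)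
    (z : ℕ) (h6D : (6:ℕ) ∣ D)
    (hdu : d u = 2) (hau : a u = z % 2)
    (hdv : d v = 3) (hav : a v = z % 3)
    (hdw1 : d w1 = 3) (haw1 : a w1 = (z + 1) % 3)
    (hdw2 : d w2 = 3) (haw2 : a w2 = (z + 2) % 3)
    (hdw3 : d w3 = 6) (haw3 : a w3 = (z + 3) % 6) : False := by
  have h2D : (2:ℕ) ∣ D := dvd_trans (by norm_num) h6D
  have h3D : (3:ℕ) ∣ D := dvd_trans (by norm_num) h6D
  have key : ∀ c m : ℕ, m ∣ D → ((z + c) % D) % m = (z + c) % m :=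
    fun c m hm => Nat.mod_mod_of_dvd _ hm
  have hj1D : (z + 4) % D < D := Nat.mod_lt _ hD
  have hj2D : (z + 1) % D < D := Nat.mod_lt _ hD
  have hsub : resR P (fun i => resK D (d i) (a i)) ((z + 1) % D)
      ⊆ resR P (fun i => resK D (d i) (a i)) ((z + 4) % D) := by
    rintro i ⟨hiP, hij⟩
    have hij2 := hij.2
    rcases hcover i hiP with rfl|rfl|rfl|rfl|rfl
    · rw [hdu, hau, key 1 2 h2D] at hij2; omega
    · rw [hdv, hav, key 1 3 h3D] at hij2; omega
    · refine ⟨hiP, hj1D, ?_⟩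
      rw [hdw1, haw1, key 4 3 h3D]; omega
    · rw [hdw2, haw2, key 1 3 h3D] at hij2; omega
    · rw [hdw3, haw3, key 1 6 h6D] at hij2; omega
  have heq := hac ((z + 4) % D) ((z + 1) % D) hj1D hj2D hsub
  have huj1 : u ∈ resR P (fun i => resK D (d i) (a i)) ((z + 4) % D) := by
    refine ⟨hu, hj1D, ?_⟩
    rw [hdu, hau, key 4 2 h2D]; omega
  rw [← heq] at huj1
  have := huj1.2.2
  rw [hdu, hau, key 1 2 h2D] at this; omega

private lemma main_pair {T : Type*} [Fintype T] (D : ℕ) (hD : 0 < D)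
    (d a : T → ℕ) (hdvd : ∀ i, d i ∣ D) (hd : ∀ i, 0 < d i)
    (P : Set T)
    (hac : ∀ j j' : ℕ, j < D → j' < D →
      resR P (fun i => resK D (d i) (a i)) j' ⊆ resR P (fun i => resK D (d i) (a i)) j →
      resR P (fun i => resK D (d i) (a i)) j' = resR P (fun i => resK D (d i) (a i)) j)
    (hcard : P.ncard ≤ 5)
    (i1 i2 : T) (h1 : i1 ∈ P) (h2 : i2 ∈ P)
    (hKne : resK D (d i1) (a i1) ≠ resK D (d i2) (a i2))
    (hmax1 : ∀ i' ∈ P, ¬ resK D (d i1) (a i1) ⊂ resK D (d i') (a i'))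
    (hmax2 : ∀ i' ∈ P, ¬ resK D (d i2) (a i2) ⊂ resK D (d i') (a i'))
    (z : ℕ) (hz1 : z ∈ resK D (d i1) (a i1)) (hz2 : z ∈ resK D (d i2) (a i2)) :
    ∃ u w, u ∈ P ∧ w ∈ P ∧ d u = 2 ∧ d w = 2 ∧ a u ≠ a w := by
  have hzD : z < D := hz1.1
  have hza1 : z % d i1 = a i1 := hz1.2
  have hza2 : z % d i2 = a i2 := hz2.2
  have hi12 : i1 ≠ i2 := by rintro rfl; exact hKne rfl
  have hnd1 : ¬ d i1 ∣ d i2 := by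
    intro hdd
    have hsub : resK D (d i2) (a i2) ⊆ resK D (d i1) (a i1) := by
      intro j hj
      refine ⟨hj.1, ?_⟩
      have hmodeq : j ≡ z [MOD d i2] := by
        unfold Nat.ModEq; rw [hj.2, hza2]
      have h' := hmodeq.of_dvd hdd
      unfold Nat.ModEq at h'; rw [h', hza1]
    exact hmax2 i1 h1 (Set.ssubset_iff_subset_ne.mpr ⟨hsub, hKne.symm⟩)
  have hnd2 : ¬ d i2 ∣ d i1 := by
    intro hdd
    have hsub : resK D (d i1) (a i1) ⊆ resK D (d i2) (a i2) := by
      intro j hj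
      refine ⟨hj.1, ?_⟩
      have hmodeq : j ≡ z [MOD d i1] := by
        unfold Nat.ModEq; rw [hj.2, hza1]
      have h' := hmodeq.of_dvd hdd
      unfold Nat.ModEq at h'; rw [h', hza2]
    exact hmax1 i2 h2 (Set.ssubset_iff_subset_ne.mpr ⟨hsub, hKne⟩)
  have hL0 : 0 < Nat.lcm (d i1) (d i2) := Nat.lcm_pos (hd i1) (hd i2)
  have hLD : Nat.lcm (d i1) (d i2) ∣ D := Nat.lcm_dvd (hdvd i1) (hdvd i2)
  have hL6 : 6 ≤ Nat.lcm (d i1) (d i2) := by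
    by_contra hh
    push_neg at hh
    obtain ⟨h6, -⟩ := divisors_incomp hnd1 hnd2 (Nat.dvd_lcm_left _ _) (Nat.dvd_lcm_right _ _)
      hL0 (Or.inl (by omega))
    omega
  have hcov : ∀ c : ℕ, ¬ Nat.lcm (d i1) (d i2) ∣ c →
      ∃ w, w ∈ P ∧ z % d w ≠ a w ∧ (z + c) % d w = a w := by
    intro c hc
    have hjD : (z + c) % D < D := Nat.mod_lt _ hD
    by_contra hno
    push_neg at hno
    have hsub : resR P (fun i => resK D (d i) (a i)) ((z + c) % D)
        ⊆ resR P (fun i => resK D (d i) (a i)) z := by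
      rintro i ⟨hiP, hij⟩
      have hmi : (z + c) % d i = a i := by
        have h2' := hij.2
        rwa [Nat.mod_mod_of_dvd _ (hdvd i)] at h2'
      by_cases hzi : z % d i = a i
      · exact ⟨hiP, hzD, hzi⟩
      · exact absurd hmi (hno i hiP hzi)
    have heq := hac z ((z + c) % D) hzD hjD hsub
    have h1' : i1 ∈ resR P (fun i => resK D (d i) (a i)) z := ⟨h1, hzD, hza1⟩
    have h2' : i2 ∈ resR P (fun i => resK D (d i) (a i)) z := ⟨h2, hzD, hza2⟩
    rw [← heq] at h1' h2'
    have e1 : (z + c) % d i1 = a i1 := by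
      have := h1'.2.2; rwa [Nat.mod_mod_of_dvd _ (hdvd i1)] at this
    have e2 : (z + c) % d i2 = a i2 := by
      have := h2'.2.2; rwa [Nat.mod_mod_of_dvd _ (hdvd i2)] at this
    have d1c : d i1 ∣ c := by
      simpa using dvd_sub_of_mod (by simpa using hza1) e1 (Nat.zero_le c)
    have d2c : d i2 ∣ c := by
      simpa using dvd_sub_of_mod (by simpa using hza2) e2 (Nat.zero_le c)
    exact hc (Nat.lcm_dvd d1c d2c)
  have hLnot : ∀ c : ℕ, 0 < c → c < 6 → ¬ Nat.lcm (d i1) (d i2) ∣ c := by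
    intro c h0 h6 hdvd'
    have := Nat.le_of_dvd h0 hdvd'
    omega
  obtain ⟨w1, hPw1, hzw1, hm1⟩ := hcov 1 (hLnot 1 (by norm_num) (by norm_num))
  obtain ⟨w2, hPw2, hzw2, hm2⟩ := hcov 2 (hLnot 2 (by norm_num) (by norm_num))
  obtain ⟨w3, hPw3, hzw3, hm3⟩ := hcov 3 (hLnot 3 (by norm_num) (by norm_num))
  obtain ⟨w4, hPw4, hzw4, hm4⟩ := hcov 4 (hLnot 4 (by norm_num) (by norm_num))
  obtain ⟨w5, hPw5, hzw5, hm5⟩ := hcov 5 (hLnot 5 (by norm_num) (by norm_num))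
  have hi1w : ∀ w' : T, z % d w' ≠ a w' → i1 ≠ w' := by
    intro w' hzw' h; exact hzw' (h ▸ hza1)
  have hi2w : ∀ w' : T, z % d w' ≠ a w' → i2 ≠ w' := by
    intro w' hzw' h; exact hzw' (h ▸ hza2)
  -- adjacent pairs are distinct
  have hne12 : w1 ≠ w2 := by
    rintro rfl
    exact not_dvd_of_mod hm1 hzw1 (by simpa using dvd_sub_of_mod hm1 hm2 (by norm_num))
  have hne23 : w2 ≠ w3 := by
    rintro rfl
    exact not_dvd_of_mod hm2 hzw2
      (by have h := dvd_sub_of_mod hm2 hm3 (by norm_num)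
          have he : d w2 = 1 := Nat.dvd_one.mp (by simpa using h)
          rw [he]; exact one_dvd _)
  have hne34 : w3 ≠ w4 := by
    rintro rfl
    exact not_dvd_of_mod hm3 hzw3
      (by have h := dvd_sub_of_mod hm3 hm4 (by norm_num)
          have he : d w3 = 1 := Nat.dvd_one.mp (by simpa using h)
          rw [he]; exact one_dvd _)
  have hne45 : w4 ≠ w5 := by
    rintro rfl
    exact not_dvd_of_mod hm4 hzw4
      (by have h := dvd_sub_of_mod hm4 hm5 (by norm_num)
          have he : d w4 = 1 := Nat.dvd_one.mp (by simpa using h)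
          rw [he]; exact one_dvd _)
  have hne24 : w2 ≠ w4 := by
    rintro rfl
    exact not_dvd_of_mod hm2 hzw2 (by simpa using dvd_sub_of_mod hm2 hm4 (by norm_num))
  -- helper to produce the concluding pair once L = 6 is known
  have mk : ∀ w : T, w ∈ P → Nat.lcm (d i1) (d i2) = 6 → d w = 2 → a w ≠ z % 2 →
      ∃ u w', u ∈ P ∧ w' ∈ P ∧ d u = 2 ∧ d w' = 2 ∧ a u ≠ a w' := by
    intro w hwP hL6eq hdw hne
    have hd16 : d i1 ∣ 6 := hL6eq ▸ Nat.dvd_lcm_left _ _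
    have hd26 : d i2 ∣ 6 := hL6eq ▸ Nat.dvd_lcm_right _ _
    rcases pick23 hd16 hd26 hnd1 hnd2 with ⟨hA1, hA2⟩ | ⟨hA1, hA2⟩
    · exact ⟨i1, w, h1, hwP, hA1, hdw, by rw [← hza1, hA1]; exact fun hh => hne hh.symm⟩
    · exact ⟨i2, w, h2, hwP, hA2, hdw, by rw [← hza2, hA2]; exact fun hh => hne hh.symm⟩
  by_cases hA : w1 = w3
  case neg =>
    -- Case B : w1, w2, w3 pairwise distinct
    have cover3 : ∀ {x : T}, x ∈ P → x = i1 ∨ x = i2 ∨ x = w1 ∨ x = w2 ∨ x = w3 :=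
      fun {x} hx => five_cover P hcard i1 i2 w1 w2 w3 h1 h2 hPw1 hPw2 hPw3 hi12
        (hi1w w1 hzw1) (hi1w w2 hzw2) (hi1w w3 hzw3)
        (hi2w w1 hzw1) (hi2w w2 hzw2) (hi2w w3 hzw3) hne12 hA hne23 hx
    have hw41 : w4 = w1 := by
      rcases cover3 hPw4 with h|h|h|h|h
      · exact absurd hza1 (h ▸ hzw4)
      · exact absurd hza2 (h ▸ hzw4)
      · exact h
      · exact absurd h.symm hne24
      · exact absurd h.symm hne34
    have hm4' : (z + 4) % d w1 = a w1 := hw41 ▸ hm4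
    have hdw1e : d w1 = 3 := pin3 (by simpa using dvd_sub_of_mod hm1 hm4' (by norm_num))
        (not_dvd_of_mod hm1 hzw1)
    have hw5e : w5 = w2 ∨ w5 = w3 := by
      rcases cover3 hPw5 with h|h|h|h|h
      · exact absurd hza1 (h ▸ hzw5)
      · exact absurd hza2 (h ▸ hzw5)
      · exact absurd (hw41.trans h.symm) hne45
      · exact Or.inl h
      · exact Or.inr h
    rcases hw5e with h5e | h5e
    · -- Pattern P1 : classes {1,4}/3, {2,5}/3, {3}
      have hm5' : (z + 5) % d w2 = a w2 := h5e ▸ hm5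
      have hdw2e : d w2 = 3 := pin3b (by simpa using dvd_sub_of_mod hm2 hm5' (by norm_num))
          (not_dvd_of_mod hm2 hzw2)
      have hL6eq : Nat.lcm (d i1) (d i2) = 6 := by
        by_contra h6ne
        have hnd6 : ¬ Nat.lcm (d i1) (d i2) ∣ 6 := by
          intro hdvd6; have := Nat.le_of_dvd (by norm_num) hdvd6; omega
        obtain ⟨w6, hPw6, hzw6, hm6⟩ := hcov 6 hnd6
        rcases cover3 hPw6 with h|h|h|h|h
        · exact absurd hza1 (h ▸ hzw6)
        · exact absurd hza2 (h ▸ hzw6)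
        · have hm6' : (z + 6) % d w1 = a w1 := h ▸ hm6
          have hdd := dvd_sub_of_mod hm1 hm6' (by norm_num)
          rw [hdw1e] at hdd; omega
        · have hm6' : (z + 6) % d w2 = a w2 := h ▸ hm6
          have hdd := dvd_sub_of_mod hm2 hm6' (by norm_num)
          rw [hdw2e] at hdd; omega
        · have hm6' : (z + 6) % d w3 = a w3 := h ▸ hm6
          exact not_dvd_of_mod hm3 hzw3 (by simpa using dvd_sub_of_mod hm3 hm6' (by norm_num))
      have h9 : ¬ Nat.lcm (d i1) (d i2) ∣ 9 := by rw [hL6eq]; omega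
      obtain ⟨w9, hPw9, hzw9, hm9⟩ := hcov 9 h9
      have hw93 : w9 = w3 := by
        rcases cover3 hPw9 with h|h|h|h|h
        · exact absurd hza1 (h ▸ hzw9)
        · exact absurd hza2 (h ▸ hzw9)
        · have hm9' : (z + 9) % d w1 = a w1 := h ▸ hm9
          have hdd := dvd_sub_of_mod hm1 hm9' (by norm_num)
          rw [hdw1e] at hdd; omega
        · have hm9' : (z + 9) % d w2 = a w2 := h ▸ hm9
          have hdd := dvd_sub_of_mod hm2 hm9' (by norm_num)
          rw [hdw2e] at hdd; omega
        · exact h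
      have hm9' : (z + 9) % d w3 = a w3 := hw93 ▸ hm9
      rcases pin26 (by simpa using dvd_sub_of_mod hm3 hm9' (by norm_num))
          (not_dvd_of_mod hm3 hzw3) with hdw3e | hdw3e
      · exact mk w3 hPw3 hL6eq hdw3e (by intro hh; rw [hdw3e] at hm3; omega)
      · exfalso
        have h6D : (6:ℕ) ∣ D := hL6eq ▸ hLD
        have haw1e : a w1 = (z + 1) % 3 := by rw [← hm1, hdw1e]
        have haw2e : a w2 = (z + 2) % 3 := by rw [← hm2, hdw2e]
        have haw3e : a w3 = (z + 3) % 6 := by rw [← hm3, hdw3e]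
        have hd16 : d i1 ∣ 6 := hL6eq ▸ Nat.dvd_lcm_left _ _
        have hd26 : d i2 ∣ 6 := hL6eq ▸ Nat.dvd_lcm_right _ _
        rcases pick23 hd16 hd26 hnd1 hnd2 with ⟨hA1, hA2⟩ | ⟨hA1, hA2⟩
        · exact kill D hD d a P hac i1 i2 w1 w2 w3 h1 hPw1 (fun x hx => cover3 hx) z h6D
            hA1 (by rw [← hza1, hA1]) hA2 (by rw [← hza2, hA2])
            hdw1e haw1e hdw2e haw2e hdw3e haw3e
        · exact kill D hD d a P hac i2 i1 w1 w2 w3 h2 hPw1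
            (fun x hx => by rcases cover3 hx with h|h|h|h|h <;> tauto) z h6D
            hA2 (by rw [← hza2, hA2]) hA1 (by rw [← hza1, hA1])
            hdw1e haw1e hdw2e haw2e hdw3e haw3e
    · -- Pattern P3 : classes {1,4}/3, {3,5}/2, {2}
      have hm5' : (z + 5) % d w3 = a w3 := h5e ▸ hm5
      have hdw3e : d w3 = 2 := pin2b (by simpa using dvd_sub_of_mod hm3 hm5' (by norm_num))
          (not_dvd_of_mod hm3 hzw3)
      have hL6eq : Nat.lcm (d i1) (d i2) = 6 := by
        by_contra h6ne
        have hnd6 : ¬ Nat.lcm (d i1) (d i2) ∣ 6 := by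
          intro hdvd6; have := Nat.le_of_dvd (by norm_num) hdvd6; omega
        obtain ⟨w6, hPw6, hzw6, hm6⟩ := hcov 6 hnd6
        have hw62 : w6 = w2 := by
          rcases cover3 hPw6 with h|h|h|h|h
          · exact absurd hza1 (h ▸ hzw6)
          · exact absurd hza2 (h ▸ hzw6)
          · have hm6' : (z + 6) % d w1 = a w1 := h ▸ hm6
            have hdd := dvd_sub_of_mod hm1 hm6' (by norm_num)
            rw [hdw1e] at hdd; omega
          · exact h
          · have hm6' : (z + 6) % d w3 = a w3 := h ▸ hm6
            have hdd := dvd_sub_of_mod hm3 hm6' (by norm_num)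
            rw [hdw3e] at hdd; omega
        have hm6' : (z + 6) % d w2 = a w2 := hw62 ▸ hm6
        have hnd26 : ¬ d w2 ∣ 6 := not_dvd_of_mod hm6' hzw2
        by_cases hL8 : Nat.lcm (d i1) (d i2) ∣ 8
        · have htri : Nat.lcm (d i1) (d i2) = 6 ∨ Nat.lcm (d i1) (d i2) = 7 ∨
              Nat.lcm (d i1) (d i2) = 8 := by
            have := Nat.le_of_dvd (by norm_num) hL8; omega
          rcases htri with h|h|h
          · exact h6ne h
          · rw [h] at hL8; omega
          · obtain ⟨hf, -⟩ := divisors_incomp hnd1 hnd2 (h ▸ Nat.dvd_lcm_left _ _)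
              (h ▸ Nat.dvd_lcm_right _ _) (by norm_num) (Or.inr rfl)
            omega
        · obtain ⟨w8, hPw8, hzw8, hm8⟩ := hcov 8 hL8
          rcases cover3 hPw8 with h|h|h|h|h
          · exact absurd hza1 (h ▸ hzw8)
          · exact absurd hza2 (h ▸ hzw8)
          · have hm8' : (z + 8) % d w1 = a w1 := h ▸ hm8
            have hdd := dvd_sub_of_mod hm1 hm8' (by norm_num)
            rw [hdw1e] at hdd; omega
          · have hm8' : (z + 8) % d w2 = a w2 := h ▸ hm8
            exact hnd26 (by simpa using dvd_sub_of_mod hm2 hm8' (by norm_num))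
          · have hm8' : (z + 8) % d w3 = a w3 := h ▸ hm8
            have hdd := dvd_sub_of_mod hm3 hm8' (by norm_num)
            rw [hdw3e] at hdd; omega
      exact mk w3 hPw3 hL6eq hdw3e (by intro hh; rw [hdw3e] at hm3; omega)
  case pos =>
    -- Case A : w1 = w3, d w1 = 2
    have hm3' : (z + 3) % d w1 = a w1 := hA.symm ▸ hm3
    have hdw1e : d w1 = 2 := pin2 (by simpa using dvd_sub_of_mod hm1 hm3' (by norm_num))
        (not_dvd_of_mod hm1 hzw1)
    have hne14 : w1 ≠ w4 := by
      intro h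
      have hm4' : (z + 4) % d w1 = a w1 := h.symm ▸ hm4
      have hdd := dvd_sub_of_mod hm3' hm4' (by norm_num)
      rw [hdw1e] at hdd; omega
    have cover3A : ∀ {x : T}, x ∈ P → x = i1 ∨ x = i2 ∨ x = w1 ∨ x = w2 ∨ x = w4 :=
      fun {x} hx => five_cover P hcard i1 i2 w1 w2 w4 h1 h2 hPw1 hPw2 hPw4 hi12
        (hi1w w1 hzw1) (hi1w w2 hzw2) (hi1w w4 hzw4)
        (hi2w w1 hzw1) (hi2w w2 hzw2) (hi2w w4 hzw4) hne12 hne14 hne24 hx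
    have hw5e : w5 = w1 ∨ w5 = w2 := by
      rcases cover3A hPw5 with h|h|h|h|h
      · exact absurd hza1 (h ▸ hzw5)
      · exact absurd hza2 (h ▸ hzw5)
      · exact Or.inl h
      · exact Or.inr h
      · exact absurd h.symm hne45
    rcases hw5e with h5e | h5e
    · -- Pattern P4 : classes {1,3,5}/2, {2}, {4}
      have hL6eq : Nat.lcm (d i1) (d i2) = 6 := by
        by_contra h6ne
        have hnd6 : ¬ Nat.lcm (d i1) (d i2) ∣ 6 := by
          intro hdvd6; have := Nat.le_of_dvd (by norm_num) hdvd6; omega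
        obtain ⟨w6, hPw6, hzw6, hm6⟩ := hcov 6 hnd6
        have hw62 : w6 = w2 := by
          rcases cover3A hPw6 with h|h|h|h|h
          · exact absurd hza1 (h ▸ hzw6)
          · exact absurd hza2 (h ▸ hzw6)
          · have hm6' : (z + 6) % d w1 = a w1 := h ▸ hm6
            have hdd := dvd_sub_of_mod hm1 hm6' (by norm_num)
            rw [hdw1e] at hdd; omega
          · exact h
          · have hm6' : (z + 6) % d w4 = a w4 := h ▸ hm6
            exact (c24 (by simpa using dvd_sub_of_mod hm4 hm6' (by norm_num))
              (not_dvd_of_mod hm4 hzw4)).elim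
        have hm6' : (z + 6) % d w2 = a w2 := hw62 ▸ hm6
        have hnd26 : ¬ d w2 ∣ 6 := not_dvd_of_mod hm6' hzw2
        by_cases hL8 : Nat.lcm (d i1) (d i2) ∣ 8
        · have htri : Nat.lcm (d i1) (d i2) = 6 ∨ Nat.lcm (d i1) (d i2) = 7 ∨
              Nat.lcm (d i1) (d i2) = 8 := by
            have := Nat.le_of_dvd (by norm_num) hL8; omega
          rcases htri with h|h|h
          · exact h6ne h
          · rw [h] at hL8; omega
          · obtain ⟨hf, -⟩ := divisors_incomp hnd1 hnd2 (h ▸ Nat.dvd_lcm_left _ _)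
              (h ▸ Nat.dvd_lcm_right _ _) (by norm_num) (Or.inr rfl)
            omega
        · obtain ⟨w8, hPw8, hzw8, hm8⟩ := hcov 8 hL8
          rcases cover3A hPw8 with h|h|h|h|h
          · exact absurd hza1 (h ▸ hzw8)
          · exact absurd hza2 (h ▸ hzw8)
          · have hm8' : (z + 8) % d w1 = a w1 := h ▸ hm8
            have hdd := dvd_sub_of_mod hm1 hm8' (by norm_num)
            rw [hdw1e] at hdd; omega
          · have hm8' : (z + 8) % d w2 = a w2 := h ▸ hm8
            exact hnd26 (by simpa using dvd_sub_of_mod hm2 hm8' (by norm_num))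
          · have hm8' : (z + 8) % d w4 = a w4 := h ▸ hm8
            have hdd := dvd_sub_of_mod hm4 hm8' (by norm_num)
            exact (not_dvd_of_mod hm4 hzw4) (by simpa using hdd)
      exact mk w1 hPw1 hL6eq hdw1e (by intro hh; rw [hdw1e] at hm1; omega)
    · -- Pattern P2 : classes {1,3}/2, {2,5}/3, {4}
      have hm5' : (z + 5) % d w2 = a w2 := h5e ▸ hm5
      have hdw2e : d w2 = 3 := pin3b (by simpa using dvd_sub_of_mod hm2 hm5' (by norm_num))
          (not_dvd_of_mod hm2 hzw2)
      have hL6eq : Nat.lcm (d i1) (d i2) = 6 := by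
        by_contra h6ne
        have hnd6 : ¬ Nat.lcm (d i1) (d i2) ∣ 6 := by
          intro hdvd6; have := Nat.le_of_dvd (by norm_num) hdvd6; omega
        obtain ⟨w6, hPw6, hzw6, hm6⟩ := hcov 6 hnd6
        rcases cover3A hPw6 with h|h|h|h|h
        · exact absurd hza1 (h ▸ hzw6)
        · exact absurd hza2 (h ▸ hzw6)
        · have hm6' : (z + 6) % d w1 = a w1 := h ▸ hm6
          have hdd := dvd_sub_of_mod hm1 hm6' (by norm_num)
          rw [hdw1e] at hdd; omega
        · have hm6' : (z + 6) % d w2 = a w2 := h ▸ hm6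
          have hdd := dvd_sub_of_mod hm2 hm6' (by norm_num)
          rw [hdw2e] at hdd; omega
        · have hm6' : (z + 6) % d w4 = a w4 := h ▸ hm6
          exact c24 (by simpa using dvd_sub_of_mod hm4 hm6' (by norm_num))
            (not_dvd_of_mod hm4 hzw4)
      exact mk w1 hPw1 hL6eq hdw1e (by intro hh; rw [hdw1e] at hm1; omega)

/-- in the residue-set setting with admissible `P`, if `|P| ≤ 5` then
there is `W ⊆ T₁` with the `K_i`, `i ∈ W`, pairwise disjoint and
`∪_{i∈W} K_i = ∪_{i∈T₁} K_i`. -/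
theorem statement12 {T : Type*} [Fintype T] (D : ℕ) (hD : 0 < D)
    (d a : T → ℕ) (hdvd : ∀ i, d i ∣ D) (hd : ∀ i, 0 < d i) (ha : ∀ i, a i < d i)
    (P : Set T) (hP : ResAdmissible D (fun i => resK D (d i) (a i)) P)
    (hcard : P.ncard ≤ 5) :
    ∃ W : Set T,
      (W.Pairwise fun i i' => Disjoint (resK D (d i) (a i)) (resK D (d i') (a i'))) ∧
      (⋃ i ∈ W, resK D (d i) (a i)) = ⋃ i : T, resK D (d i) (a i) := by
  classical
  obtain ⟨i0, hi0⟩ := hP.1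
  have hzi0 : a i0 ∈ resK D (d i0) (a i0) :=
    ⟨lt_of_lt_of_le (ha i0) (Nat.le_of_dvd hD (hdvd i0)), Nat.mod_eq_of_lt (ha i0)⟩
  have hcover0 : ∀ j, j < D → ∃ i ∈ P, j ∈ resK D (d i) (a i) := by
    intro j hj
    by_contra hno
    push_neg at hno
    have hsub : resR P (fun i => resK D (d i) (a i)) j ⊆
        resR P (fun i => resK D (d i) (a i)) (a i0) := by
      rintro i ⟨hiP, hij⟩
      exact absurd hij (hno i hiP)
    have heq := hP.2.2 (a i0) j hzi0.1 hj hsub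
    have hmem : i0 ∈ resR P (fun i => resK D (d i) (a i)) j := by
      rw [heq]; exact ⟨hi0, hzi0⟩
    exact (hno i0 hi0) hmem.2
  have hclimb : ∀ i ∈ P, ∃ m ∈ P, resK D (d i) (a i) ⊆ resK D (d m) (a m) ∧
      ∀ i' ∈ P, ¬ resK D (d m) (a m) ⊂ resK D (d i') (a i') := by
    intro i hi
    obtain ⟨m, hm, hmax⟩ := Set.Finite.exists_maximalFor (fun i' => resK D (d i') (a i'))
      {i' ∈ P | resK D (d i) (a i) ⊆ resK D (d i') (a i')} (Set.toFinite _)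
      ⟨i, hi, Set.Subset.rfl⟩
    refine ⟨m, hm.1, hm.2, ?_⟩
    intro i' hi' hss
    exact hss.2 (hmax ⟨hi', hm.2.trans hss.subset⟩ hss.subset)
  by_cases hall : ∀ m ∈ P, ∀ m' ∈ P,
      (∀ i' ∈ P, ¬ resK D (d m) (a m) ⊂ resK D (d i') (a i')) →
      (∀ i' ∈ P, ¬ resK D (d m') (a m') ⊂ resK D (d i') (a i')) →
      resK D (d m) (a m) = resK D (d m') (a m') ∨
      Disjoint (resK D (d m) (a m)) (resK D (d m') (a m'))
  · -- maximal sets are pairwise equal-or-disjoint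
    have hne : Nonempty T := ⟨i0⟩
    set rep : T → T :=
      fun m => Classical.epsilon fun i => i ∈ P ∧ resK D (d i) (a i) = resK D (d m) (a m)
      with hrep
    have hrepSpec : ∀ m ∈ P, rep m ∈ P ∧
        resK D (d (rep m)) (a (rep m)) = resK D (d m) (a m) := by
      intro m hm
      simp only [hrep]
      exact Classical.epsilon_spec
        (⟨m, hm, rfl⟩ : ∃ i, i ∈ P ∧ resK D (d i) (a i) = resK D (d m) (a m))
    have hrepEq : ∀ m m', resK D (d m) (a m) = resK D (d m') (a m') → rep m = rep m' := by
      intro m m' hKe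
      simp only [hrep]
      exact congrArg _ (by funext i; rw [hKe])
    refine ⟨{i | ∃ m, m ∈ P ∧ (∀ i' ∈ P, ¬ resK D (d m) (a m) ⊂ resK D (d i') (a i')) ∧
      rep m = i}, ?_, ?_⟩
    · rintro x ⟨m, hmP, hmax, rfl⟩ y ⟨m', hmP', hmax', rfl⟩ hxy
      by_cases hKe : resK D (d m) (a m) = resK D (d m') (a m')
      · exact absurd (hrepEq m m' hKe) hxy
      · have hdisj := (hall m hmP m' hmP' hmax hmax').resolve_left hKe
        rw [(hrepSpec m hmP).2, (hrepSpec m' hmP').2]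
        exact hdisj
    · apply Set.eq_of_subset_of_subset
      · exact Set.iUnion₂_subset fun i _ =>
          Set.subset_iUnion (fun i => resK D (d i) (a i)) i
      · intro x hx
        obtain ⟨i, hxi⟩ := Set.mem_iUnion.mp hx
        obtain ⟨i', hi'P, hxi'⟩ := hcover0 x hxi.1
        obtain ⟨m, hmP, hsubm, hmax⟩ := hclimb i' hi'P
        refine Set.mem_biUnion (x := rep m) ⟨m, hmP, hmax, rfl⟩ ?_
        rw [(hrepSpec m hmP).2]
        exact hsubm hxi'
  · -- two distinct intersecting maximal sets
    push_neg at hall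
    obtain ⟨m, hmP, m', hmP', hmax, hmax', hKne, hndisj⟩ := hall
    obtain ⟨z, hz1, hz2⟩ := Set.not_disjoint_iff.mp hndisj
    obtain ⟨u, w, huP, hwP, hdu, hdw, hane⟩ :=
      main_pair D hD d a hdvd hd P hP.2.2 hcard m m' hmP hmP' hKne hmax hmax' z hz1 hz2
    have hdisj : Disjoint (resK D (d u) (a u)) (resK D (d w) (a w)) := by
      rw [Set.disjoint_left]
      intro p hp hq
      have h1 := hp.2
      have h2 := hq.2
      rw [hdu] at h1; rw [hdw] at h2
      exact hane (by omega)
    refine ⟨{u, w}, ?_, ?_⟩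
    · intro x hx y hy hxy
      simp only [Set.mem_insert_iff, Set.mem_singleton_iff] at hx hy
      rcases hx with rfl|rfl <;> rcases hy with rfl|rfl
      · exact absurd rfl hxy
      · exact hdisj
      · exact hdisj.symm
      · exact absurd rfl hxy
    · apply Set.eq_of_subset_of_subset
      · exact Set.iUnion₂_subset fun i _ =>
          Set.subset_iUnion (fun i => resK D (d i) (a i)) i
      · intro x hx
        obtain ⟨i, hxi⟩ := Set.mem_iUnion.mp hx
        have hxD : x < D := hxi.1
        have hau : a u < 2 := hdu ▸ ha u
        have haw : a w < 2 := hdw ▸ ha w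
        have hor : x % 2 = a u ∨ x % 2 = a w := by omega
        rcases hor with h|h
        · exact Set.mem_biUnion (Set.mem_insert _ _) ⟨hxD, by rw [hdu]; exact h⟩
        · exact Set.mem_biUnion (Set.mem_insert_of_mem _ rfl) ⟨hxD, by rw [hdw]; exact h⟩
end
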